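/- arXiv:2507.04848 — 9 statements merged into one kernel-verified Lean document; each statement's English description precedes it below -/
import Mathlib

section
/- Let T = (t_n)_{n≥0} be the Thue–Morse sequence over the alphabet {2,3} starting with 2, i.e., the unique fixed point starting with 2 of the morphism τ : 2 ↦ 23, 3 ↦ 32; T is a Cantor real base. For every real r ∈ [0,1), if c_0 c_1 c_2 ⋯ is the greedy base-6 expansion of r, then the greedy T-expansion of r equals the concatenation h_{t_0}(c_0) h_{t_1}(c_1) h_{t_2}(c_2) ⋯, where for c ∈ {0,…,5} the two-letter word h_2(c) = ab is determined by c = 3a + b with a ∈ {0,1}, b ∈ {0,1,2}, and h_3(c) = ab is determined by c = 2a + b with a ∈ {0,1,2}, b ∈ {0,1}. -/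
noncomputable section

/-- The greedy `B`-expansion property for a Cantor real base `B = (β_n)` and `r ∈ [0,1]`:
the digit sequence `a` sums to `r` and satisfies the greedy (tail) inequalities. -/
def IsGreedyExpansion (B : ℕ → ℝ) (r : ℝ) (a : ℕ → ℕ) : Prop :=
  HasSum (fun n => (a n : ℝ) / ∏ i ∈ Finset.range (n + 1), B i) r ∧
  ∀ ℓ : ℕ, 1 ≤ ℓ →
    (∑' n : ℕ, (a (n + ℓ) : ℝ) / ∏ i ∈ Finset.range (n + ℓ + 1), B i)
      < 1 / ∏ i ∈ Finset.range ℓ, B i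

/-- Let `t` be the Thue–Morse sequence over `{2,3}` starting with `2`, i.e. the unique
fixed point starting with `2` of the morphism `τ : 2 ↦ 23, 3 ↦ 32` (equivalently,
`t 0 = 2`, `t (2n) = t n` and `t (2n+1)` is the other letter).  If `c` is the greedy
base-`6` expansion of `r ∈ [0,1)` and `y` is the concatenation
`h_{t 0}(c 0) h_{t 1}(c 1) h_{t 2}(c 2) ⋯`, where `h_2(c) = (c / 3, c % 3)` and
`h_3(c) = (c / 2, c % 2)`, then `y` is the greedy `T`-expansion of `r`. -/
theorem thueMorse_expansion
    (t : ℕ → ℕ) (ht0 : t 0 = 2)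
    (hte : ∀ n, t (2 * n) = t n)
    (hto : ∀ n, t (2 * n + 1) = if t n = 2 then 3 else 2)
    (r : ℝ) (hr0 : 0 ≤ r) (hr1 : r < 1)
    (c : ℕ → ℕ) (hc : IsGreedyExpansion (fun _ => (6 : ℝ)) r c)
    (y : ℕ → ℕ)
    (hye : ∀ n, y (2 * n) = if t n = 2 then c n / 3 else c n / 2)
    (hyo : ∀ n, y (2 * n + 1) = if t n = 2 then c n % 3 else c n % 2) :
    IsGreedyExpansion (fun n => (t n : ℝ)) r y := by
  classical
  -- the Thue–Morse sequence takes values in {2,3}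
  have ht23 : ∀ n, t n = 2 ∨ t n = 3 := by
    intro n
    induction n using Nat.strong_induction_on with
    | _ n ih =>
      rcases Nat.even_or_odd n with ⟨m, hm⟩ | ⟨m, hm⟩
      · rcases Nat.eq_zero_or_pos m with rfl | hmp
        · subst hm; simpa using Or.inl ht0
        · have hm' : n = 2 * m := by omega
          rw [hm', hte]
          exact ih m (by omega)
      · have hm' : n = 2 * m + 1 := by omega
        rw [hm', hto]
        rcases ih m (by omega) with h | h <;> simp [h]
  -- products
  have hP2 : ∀ m, (∏ i ∈ Finset.range (2 * m), (t i : ℝ)) = 6 ^ m := by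
    intro m
    induction m with
    | zero => simp
    | succ m ih =>
      have h2 : 2 * (m + 1) = 2 * m + 1 + 1 := by ring
      rw [h2, Finset.prod_range_succ, Finset.prod_range_succ, ih, hte, hto]
      rcases ht23 m with h | h <;> rw [h] <;> norm_num <;> ring
  have hPodd : ∀ m, (∏ i ∈ Finset.range (2 * m + 1), (t i : ℝ)) = 6 ^ m * t m := by
    intro m
    rw [Finset.prod_range_succ, hP2, hte]
  -- f = terms of the `y`-series, g = terms of the `c`-series
  set f : ℕ → ℝ := fun n => (y n : ℝ) / ∏ i ∈ Finset.range (n + 1), (t i : ℝ) with hf_def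
  set g : ℕ → ℝ := fun n => (c n : ℝ) / 6 ^ (n + 1) with hg_def
  have hc6 : ∀ k : ℕ, (∏ _i ∈ Finset.range k, (6 : ℝ)) = 6 ^ k := by
    intro k; simp
  have hgsum : HasSum g r := by
    have := hc.1
    simpa [hg_def, hc6] using this
  have htpos : ∀ n, (0 : ℝ) < t n := by
    intro n; rcases ht23 n with h | h <;> rw [h] <;> norm_num
  have hf0 : ∀ n, 0 ≤ f n := by
    intro n
    apply div_nonneg (Nat.cast_nonneg _)
    exact le_of_lt (Finset.prod_pos fun i _ => htpos i)
  -- the key pairing identity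
  have hpair : ∀ n, f (2 * n) + f (2 * n + 1) = g n := by
    intro n
    have h2 : 2 * n + 1 + 1 = 2 * (n + 1) := by ring
    simp only [hf_def, hg_def, h2, hPodd, hP2]
    rcases ht23 n with h | h
    · rw [hye n, hyo n, h, if_pos rfl, if_pos rfl]
      have hd : ((c n / 3 : ℕ) : ℝ) * 3 + ((c n % 3 : ℕ) : ℝ) = (c n : ℝ) := by
        exact_mod_cast congrArg (Nat.cast : ℕ → ℝ)
          (show c n / 3 * 3 + c n % 3 = c n by omega)
      have h6 : (6 : ℝ) ^ n ≠ 0 := by positivity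
      rw [show ((c n : ℕ) : ℝ) = ((c n / 3 : ℕ) : ℝ) * 3 + ((c n % 3 : ℕ) : ℝ) from hd.symm,
        pow_succ]
      field_simp
      ring
    · rw [hye n, hyo n, h, if_neg (by norm_num), if_neg (by norm_num)]
      have hd : ((c n / 2 : ℕ) : ℝ) * 2 + ((c n % 2 : ℕ) : ℝ) = (c n : ℝ) := by
        exact_mod_cast congrArg (Nat.cast : ℕ → ℝ)
          (show c n / 2 * 2 + c n % 2 = c n by omega)
      have h6 : (6 : ℝ) ^ n ≠ 0 := by positivity
      rw [show ((c n : ℕ) : ℝ) = ((c n / 2 : ℕ) : ℝ) * 2 + ((c n % 2 : ℕ) : ℝ) from hd.symm,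
        pow_succ]
      field_simp
      ring
  -- summability of even/odd parts
  have hg0 : ∀ n, 0 ≤ g n := by
    intro n; apply div_nonneg (Nat.cast_nonneg _); positivity
  have hle_even : ∀ n, f (2 * n) ≤ g n := fun n => by
    have := hpair n; have := hf0 (2 * n + 1); linarith
  have hle_odd : ∀ n, f (2 * n + 1) ≤ g n := fun n => by
    have := hpair n; have := hf0 (2 * n); linarith
  have heven : Summable fun n => f (2 * n) :=
    Summable.of_nonneg_of_le (fun n => hf0 _) hle_even hgsum.summable
  have hodd : Summable fun n => f (2 * n + 1) :=
    Summable.of_nonneg_of_le (fun n => hf0 _) hle_odd hgsum.summable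
  have hfsum : HasSum f r := by
    have h := heven.hasSum.even_add_odd hodd.hasSum
    have hsum : (∑' n, f (2 * n)) + ∑' n, f (2 * n + 1) = r := by
      rw [← Summable.tsum_add heven hodd]
      rw [← hgsum.tsum_eq]
      exact tsum_congr hpair
    rwa [hsum] at h
  have hfsummable : Summable f := hfsum.summable
  -- tails of the `y`-series starting at an even index
  have htail_even : ∀ m, (∑' n, f (n + 2 * m)) = ∑' n, g (n + m) := by
    intro m
    have hFe : Summable fun j => f (2 * j + 2 * m) := by
      have := (summable_nat_add_iff (f := fun j => f (2 * j)) m).2 heven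
      simpa [mul_add] using this
    have hFo : Summable fun j => f (2 * j + 1 + 2 * m) := by
      have := (summable_nat_add_iff (f := fun j => f (2 * j + 1)) m).2 hodd
      have h2 : ∀ j, 2 * (j + m) + 1 = 2 * j + 1 + 2 * m := by intro j; ring
      simpa [h2] using this
    have h : HasSum (fun n => f (n + 2 * m))
        ((∑' j, f (2 * j + 2 * m)) + ∑' j, f (2 * j + 1 + 2 * m)) :=
      HasSum.even_add_odd (f := fun n => f (n + 2 * m)) hFe.hasSum hFo.hasSum
    rw [h.tsum_eq, ← Summable.tsum_add hFe hFo]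
    apply tsum_congr
    intro j
    have h1 : 2 * j + 2 * m = 2 * (j + m) := by ring
    have h2 : 2 * j + 1 + 2 * m = 2 * (j + m) + 1 := by ring
    rw [h1, h2, hpair]
  -- greedy tails of the `c`-expansion
  have htail_c : ∀ m : ℕ, 1 ≤ m → (∑' n, g (n + m)) < 1 / 6 ^ m := by
    intro m hm
    have := hc.2 m hm
    simpa [hg_def, hc6] using this
  constructor
  · exact hfsum
  · intro ℓ hℓ
    rcases Nat.even_or_odd ℓ with ⟨m, hm⟩ | ⟨m, hm⟩
    · have hm' : ℓ = 2 * m := by omega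
      have hm1 : 1 ≤ m := by omega
      subst hm'
      calc (∑' n, f (n + 2 * m)) = ∑' n, g (n + m) := htail_even m
        _ < 1 / 6 ^ m := htail_c m hm1
        _ = 1 / ∏ i ∈ Finset.range (2 * m), (t i : ℝ) := by rw [hP2]
    · have hm' : ℓ = 2 * m + 1 := by omega
      subst hm'
      -- split off the first term
      have hFsum : Summable fun n => f (n + (2 * m + 1)) :=
        (summable_nat_add_iff (2 * m + 1)).2 hfsummable
      have hsplit : (∑' n, f (n + (2 * m + 1)))
          = f (2 * m + 1) + ∑' n, f (n + 2 * (m + 1)) := by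
        have h := Summable.tsum_eq_zero_add hFsum
        simp only [zero_add] at h
        rw [h]
        congr 1
        apply tsum_congr
        intro n
        congr 1
        ring
      have htail : (∑' n, f (n + 2 * (m + 1))) < 1 / 6 ^ (m + 1) := by
        rw [htail_even]
        exact htail_c (m + 1) (by omega)
      have h2 : 2 * m + 1 + 1 = 2 * (m + 1) := by ring
      have hfval : f (2 * m + 1) = (y (2 * m + 1) : ℝ) / 6 ^ (m + 1) := by
        simp only [hf_def, h2, hP2]
      have h6pos : (0 : ℝ) < 6 ^ m := by positivity
      rw [hsplit, hPodd]
      rcases ht23 m with h | h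
      · have hy : (y (2 * m + 1) : ℝ) ≤ 2 := by
          rw [hyo, h, if_pos rfl]
          exact_mod_cast Nat.le_of_lt_succ (Nat.mod_lt _ (by norm_num))
        have hfb : f (2 * m + 1) ≤ 2 / 6 ^ (m + 1) := by
          rw [hfval]
          apply div_le_div_of_nonneg_right hy (by positivity) |>.trans_eq rfl
        rw [h]
        have : (2 : ℝ) / 6 ^ (m + 1) + 1 / 6 ^ (m + 1) = 1 / (6 ^ m * 2) := by
          rw [pow_succ]; field_simp; ring
        push_cast
        linarith
      · have hy : (y (2 * m + 1) : ℝ) ≤ 1 := by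
          rw [hyo, h, if_neg (by norm_num)]
          exact_mod_cast Nat.le_of_lt_succ (Nat.mod_lt _ (by norm_num))
        have hfb : f (2 * m + 1) ≤ 1 / 6 ^ (m + 1) := by
          rw [hfval]
          exact div_le_div_of_nonneg_right hy (by positivity) |>.trans_eq (by norm_num)
        rw [h]
        have : (1 : ℝ) / 6 ^ (m + 1) + 1 / 6 ^ (m + 1) ≤ 1 / (6 ^ m * 3) := by
          rw [pow_succ]; rw [← add_div]
          rw [div_le_div_iff₀ (by positivity) (by positivity)]
          ring_nf
          nlinarith [h6pos]
        push_cast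
        linarith
end
end

section
/- Let δ ≥ 2 be an integer. For each k ∈ ℕ, let ℓ_k ≥ 1 be an integer and let γ_{k,0},…,γ_{k,ℓ_k−1} ≥ 2 be integers with γ_{k,0}⋯γ_{k,ℓ_k−1} = δ. Let r ∈ [0,1] have greedy base-δ expansion c_0 c_1 c_2 ⋯, and for each k write c_k uniquely as c_k = Σ_{j=0}^{ℓ_k−1} a_{k,j} · γ_{k,j+1}⋯γ_{k,ℓ_k−1} with integers 0 ≤ a_{k,j} < γ_{k,j}. Then, for the Cantor real base B = (γ_{0,0},…,γ_{0,ℓ_0−1}, γ_{1,0},…,γ_{1,ℓ_1−1}, …) obtained by concatenating the blocks, the greedy B-expansion of r is the concatenation of the digit blocks (a_{k,0},…,a_{k,ℓ_k−1}) for k = 0,1,2,…. -/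
noncomputable section

/-- Mixed-radix bound: digits below their radix give a value less than the full product. -/
lemma mixedRadix_lt (g d : ℕ → ℕ) (j : ℕ) :
    ∀ m : ℕ, (∀ i, j ≤ i → i < m → d i < g i) →
    ∑ i ∈ Finset.Ico j m, d i * ∏ t ∈ Finset.Ico (i + 1) m, g t
      < ∏ t ∈ Finset.Ico j m, g t := by
  intro m
  induction m with
  | zero => intro _; simp
  | succ m ih =>
    intro hd
    rcases le_or_gt j m with hj | hj
    · rw [Finset.sum_Ico_succ_top hj, Finset.prod_Ico_succ_top hj]
      have h1 : ∏ t ∈ Finset.Ico (m + 1) (m + 1), g t = 1 := by simp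
      rw [h1, mul_one]
      have hterm : ∀ i ∈ Finset.Ico j m,
          d i * ∏ t ∈ Finset.Ico (i + 1) (m + 1), g t
            = (d i * ∏ t ∈ Finset.Ico (i + 1) m, g t) * g m := by
        intro i hi
        rw [Finset.mem_Ico] at hi
        rw [Finset.prod_Ico_succ_top (by omega)]
        ring
      rw [Finset.sum_congr rfl hterm, ← Finset.sum_mul]
      have hS := ih (fun i h1 h2 => hd i h1 (by omega))
      have hdm : d m < g m := hd m hj (by omega)
      calc (∑ i ∈ Finset.Ico j m, d i * ∏ t ∈ Finset.Ico (i + 1) m, g t) * g m + d m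
          < ((∑ i ∈ Finset.Ico j m, d i * ∏ t ∈ Finset.Ico (i + 1) m, g t) + 1) * g m := by
            rw [add_mul, one_mul]; omega
        _ ≤ (∏ t ∈ Finset.Ico j m, g t) * g m := Nat.mul_le_mul_right _ (by omega)
    · rw [Finset.Ico_eq_empty (by omega : ¬ j < m + 1)]
      simp

/-- Cantor bases built from blocks of constant product `δ`: if `c` is the greedy base-`δ`
expansion of `r ∈ [0,1]`, each digit `c k` is decomposed greedily with respect to the
block `γ_{k,0},…,γ_{k,ℓ_k−1}` (whose product is `δ`) as
`c k = Σ_j a_{k,j}·γ_{k,j+1}⋯γ_{k,ℓ_k−1}` with `0 ≤ a_{k,j} < γ_{k,j}`, and `B` is the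
Cantor real base obtained by concatenating the blocks, then the concatenation `y` of the
digit blocks `(a_{k,0},…,a_{k,ℓ_k−1})` is the greedy `B`-expansion of `r`. -/
theorem blocks_constant_product_expansion
    (δ : ℕ) (hδ : 2 ≤ δ)
    (ℓ : ℕ → ℕ) (hℓ : ∀ k, 1 ≤ ℓ k)
    (γ : ℕ → ℕ → ℕ) (hγ2 : ∀ k, ∀ j < ℓ k, 2 ≤ γ k j)
    (hprod : ∀ k, ∏ j ∈ Finset.range (ℓ k), γ k j = δ)
    (r : ℝ) (hr0 : 0 ≤ r) (hr1 : r ≤ 1)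
    (c : ℕ → ℕ) (hc : IsGreedyExpansion (fun _ => (δ : ℝ)) r c)
    (a : ℕ → ℕ → ℕ)
    (ha_lt : ∀ k, ∀ j < ℓ k, a k j < γ k j)
    (ha_sum : ∀ k, c k =
      ∑ j ∈ Finset.range (ℓ k), a k j * ∏ i ∈ Finset.Ico (j + 1) (ℓ k), γ k i)
    (B : ℕ → ℝ) (y : ℕ → ℕ)
    (hB : ∀ k, ∀ j < ℓ k, B ((∑ i ∈ Finset.range k, ℓ i) + j) = (γ k j : ℝ))
    (hy : ∀ k, ∀ j < ℓ k, y ((∑ i ∈ Finset.range k, ℓ i) + j) = a k j) :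
    IsGreedyExpansion B r y := by
  classical
  have hδR : (2 : ℝ) ≤ (δ : ℝ) := by exact_mod_cast hδ
  have hδpos : (0 : ℝ) < (δ : ℝ) := by linarith
  have hδne : (δ : ℝ) ≠ 0 := ne_of_gt hδpos
  -- block starts
  set L : ℕ → ℕ := fun k => ∑ i ∈ Finset.range k, ℓ i with hLdef
  have hL0 : L 0 = 0 := by simp [hLdef]
  have hLsucc : ∀ k, L (k + 1) = L k + ℓ k := fun k => Finset.sum_range_succ _ _
  have hLmono : StrictMono L := by
    apply strictMono_nat_of_lt_succ
    intro k
    have := hℓ k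
    rw [hLsucc]
    omega
  have hLle : ∀ k, k ≤ L k := fun k => hLmono.le_apply
  -- product at block boundaries
  have hPL : ∀ k, ∏ i ∈ Finset.range (L k), B i = (δ : ℝ) ^ k := by
    intro k
    induction k with
    | zero => simp [hL0]
    | succ k ih =>
      rw [hLsucc, Finset.prod_range_add, ih, pow_succ]
      congr 1
      rw [Finset.prod_congr rfl (fun i hi => hB k i (Finset.mem_range.mp hi)),
        ← Nat.cast_prod, hprod k]
  have hPLj : ∀ k j, j ≤ ℓ k → ∏ i ∈ Finset.range (L k + j), B i
      = (δ : ℝ) ^ k * ∏ i ∈ Finset.range j, (γ k i : ℝ) := by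
    intro k j hj
    rw [Finset.prod_range_add, hPL]
    congr 1
    exact Finset.prod_congr rfl (fun i hi => hB k i (lt_of_lt_of_le (Finset.mem_range.mp hi) hj))
  -- product split within a block
  have hQ : ∀ k j, j ≤ ℓ k →
      (∏ i ∈ Finset.range j, γ k i) * ∏ i ∈ Finset.Ico j (ℓ k), γ k i = δ := by
    intro k j hj
    rw [Finset.prod_range_mul_prod_Ico _ hj, hprod]
  have hγpos : ∀ k j, j ≤ ℓ k → (0 : ℝ) < ∏ i ∈ Finset.range j, (γ k i : ℝ) := by
    intro k j hj
    apply Finset.prod_pos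
    intro i hi
    have := hγ2 k i (lt_of_lt_of_le (Finset.mem_range.mp hi) hj)
    positivity
  -- single-term identity
  have hf_block : ∀ k j, j < ℓ k →
      (y (L k + j) : ℝ) / ∏ i ∈ Finset.range (L k + j + 1), B i
        = ((a k j * ∏ i ∈ Finset.Ico (j + 1) (ℓ k), γ k i : ℕ) : ℝ) / (δ : ℝ) ^ (k + 1) := by
    intro k j hj
    rw [hy k j hj, show L k + j + 1 = L k + (j + 1) from rfl, hPLj k (j + 1) hj]
    have hq : ((∏ i ∈ Finset.range (j + 1), γ k i : ℕ) : ℝ)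
        * ((∏ i ∈ Finset.Ico (j + 1) (ℓ k), γ k i : ℕ) : ℝ) = (δ : ℝ) := by
      exact_mod_cast congrArg (Nat.cast : ℕ → ℝ) (hQ k (j + 1) hj)
    push_cast at hq ⊢
    have h1 := hγpos k (j + 1) hj
    have h2 : (0 : ℝ) < ∏ i ∈ Finset.Ico (j + 1) (ℓ k), (γ k i : ℝ) := by
      apply Finset.prod_pos
      intro i hi
      rw [Finset.mem_Ico] at hi
      have := hγ2 k i hi.2
      positivity
    rw [div_eq_div_iff (by positivity) (by positivity)]
    rw [pow_succ]
    linear_combination (-((a k j : ℝ) * (δ : ℝ) ^ k)) * hq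
  -- block sums
  have hblock : ∀ k, ∑ j ∈ Finset.range (ℓ k),
      ((y (L k + j) : ℝ) / ∏ i ∈ Finset.range (L k + j + 1), B i)
        = (c k : ℝ) / (δ : ℝ) ^ (k + 1) := by
    intro k
    rw [Finset.sum_congr rfl (fun j hj => hf_block k j (Finset.mem_range.mp hj)),
      ← Finset.sum_div, ← Nat.cast_sum, ← ha_sum k]
  -- partial sums at block boundaries
  have hS_L : ∀ k, ∑ n ∈ Finset.range (L k), ((y n : ℝ) / ∏ i ∈ Finset.range (n + 1), B i)
      = ∑ n ∈ Finset.range k, (c n : ℝ) / (δ : ℝ) ^ (n + 1) := by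
    intro k
    induction k with
    | zero => simp [hL0]
    | succ k ih =>
      rw [hLsucc, Finset.sum_range_add, ih, Finset.sum_range_succ]
      congr 1
      rw [← hblock k]
  -- partial sums mid-block
  have hS_Lj : ∀ k j, j ≤ ℓ k →
      ∑ n ∈ Finset.range (L k + j), ((y n : ℝ) / ∏ i ∈ Finset.range (n + 1), B i)
        = (∑ n ∈ Finset.range k, (c n : ℝ) / (δ : ℝ) ^ (n + 1))
          + ((∑ j' ∈ Finset.range j, a k j' * ∏ i ∈ Finset.Ico (j' + 1) (ℓ k), γ k i : ℕ) : ℝ)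
              / (δ : ℝ) ^ (k + 1) := by
    intro k j hj
    rw [Finset.sum_range_add, hS_L]
    congr 1
    rw [Nat.cast_sum, Finset.sum_div]
    apply Finset.sum_congr rfl
    intro j' hj'
    exact hf_block k j' (lt_of_lt_of_le (Finset.mem_range.mp hj') hj)
  -- the base-δ series
  have hg : HasSum (fun n => (c n : ℝ) / (δ : ℝ) ^ (n + 1)) r := by
    have := hc.1
    simpa using this
  have hgnn : ∀ n, (0 : ℝ) ≤ (c n : ℝ) / (δ : ℝ) ^ (n + 1) := by
    intro n; positivity
  have hSc_le : ∀ m, ∑ n ∈ Finset.range m, (c n : ℝ) / (δ : ℝ) ^ (n + 1) ≤ r := by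
    intro m
    exact sum_le_hasSum (Finset.range m) (fun i _ => hgnn i) hg
  -- positivity of B
  have hdecomp : ∀ n : ℕ, ∃ k j, j < ℓ k ∧ n = L k + j := by
    intro n
    set k := Nat.findGreatest (fun k => L k ≤ n) n with hk
    have hk1 : L k ≤ n :=
      Nat.findGreatest_spec (P := fun k => L k ≤ n) (Nat.zero_le n) (by simp [hL0])
    have hk2 : n < L (k + 1) := by
      by_contra h
      push_neg at h
      have h3 : k + 1 ≤ n := le_trans (hLle (k + 1)) h
      have h4 : k + 1 ≤ k := hk ▸ Nat.le_findGreatest (P := fun k => L k ≤ n) h3 h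
      omega
    rw [hLsucc] at hk2
    exact ⟨k, n - L k, by omega, by omega⟩
  have hBpos : ∀ n, (0 : ℝ) < B n := by
    intro n
    obtain ⟨k, j, hjlt, rfl⟩ := hdecomp n
    rw [hB k j hjlt]
    have := hγ2 k j hjlt
    positivity
  have hPpos : ∀ m, (0 : ℝ) < ∏ i ∈ Finset.range m, B i := by
    intro m
    exact Finset.prod_pos (fun i _ => hBpos i)
  have hfnn : ∀ n, (0 : ℝ) ≤ (y n : ℝ) / ∏ i ∈ Finset.range (n + 1), B i := by
    intro n
    exact div_nonneg (Nat.cast_nonneg _) (le_of_lt (hPpos (n + 1)))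
  -- summability
  have hSle : ∀ m, ∑ n ∈ Finset.range m, ((y n : ℝ) / ∏ i ∈ Finset.range (n + 1), B i) ≤ r := by
    intro m
    calc ∑ n ∈ Finset.range m, ((y n : ℝ) / ∏ i ∈ Finset.range (n + 1), B i)
        ≤ ∑ n ∈ Finset.range (L m), ((y n : ℝ) / ∏ i ∈ Finset.range (n + 1), B i) :=
          Finset.sum_le_sum_of_subset_of_nonneg
            (Finset.range_subset_range.mpr (hLle m)) (fun i _ _ => hfnn i)
      _ = ∑ n ∈ Finset.range m, (c n : ℝ) / (δ : ℝ) ^ (n + 1) := hS_L m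
      _ ≤ r := hSc_le m
  have hsum : Summable (fun n => (y n : ℝ) / ∏ i ∈ Finset.range (n + 1), B i) :=
    summable_of_sum_range_le hfnn hSle
  have htsum : ∑' n, ((y n : ℝ) / ∏ i ∈ Finset.range (n + 1), B i) = r := by
    have h1 := hsum.hasSum.tendsto_sum_nat
    have h2 := h1.comp hLmono.tendsto_atTop
    have h3 : Filter.Tendsto
        (fun k => ∑ n ∈ Finset.range k, (c n : ℝ) / (δ : ℝ) ^ (n + 1))
        Filter.atTop (nhds r) := hg.tendsto_sum_nat
    refine tendsto_nhds_unique ?_ h3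
    refine h2.congr ?_
    intro k
    exact hS_L k
  have hHasSum : HasSum (fun n => (y n : ℝ) / ∏ i ∈ Finset.range (n + 1), B i) r :=
    htsum ▸ hsum.hasSum
  -- tail inequalities for c
  have hScineq : ∀ t, 1 ≤ t →
      r < (∑ n ∈ Finset.range t, (c n : ℝ) / (δ : ℝ) ^ (n + 1)) + 1 / (δ : ℝ) ^ t := by
    intro t ht
    have h1 := hc.2 t ht
    simp only [Finset.prod_const, Finset.card_range] at h1
    have h2 : (∑ n ∈ Finset.range t, (c n : ℝ) / (δ : ℝ) ^ (n + 1))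
        + ∑' n, (c (n + t) : ℝ) / (δ : ℝ) ^ (n + t + 1) = r := by
      have := Summable.sum_add_tsum_nat_add (f := fun n => (c n : ℝ) / (δ : ℝ) ^ (n + 1)) t hg.summable
      rw [hg.tsum_eq] at this
      exact this
    have h1' : (∑' n, (c (n + t) : ℝ) / (δ : ℝ) ^ (n + t + 1)) < 1 / (δ : ℝ) ^ t := by
      exact h1
    linarith
  constructor
  · exact hHasSum
  · intro m hm
    obtain ⟨k, j, hjlt, rfl⟩ := hdecomp m
    have htail0 : (∑' n, (y (n + (L k + j)) : ℝ) / ∏ i ∈ Finset.range (n + (L k + j) + 1), B i)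
        = r - ∑ n ∈ Finset.range (L k + j), ((y n : ℝ) / ∏ i ∈ Finset.range (n + 1), B i) := by
      have := Summable.sum_add_tsum_nat_add (L k + j) hsum
      rw [htsum] at this
      linarith
    rw [htail0, hS_Lj k j hjlt.le]
    rw [hPLj k j hjlt.le]
    -- notation
    set Sc := ∑ n ∈ Finset.range k, (c n : ℝ) / (δ : ℝ) ^ (n + 1) with hScdef
    set M : ℕ := ∑ j' ∈ Finset.range j, a k j' * ∏ i ∈ Finset.Ico (j' + 1) (ℓ k), γ k i with hMdef
    set N : ℕ := ∑ j' ∈ Finset.Ico j (ℓ k), a k j' * ∏ i ∈ Finset.Ico (j' + 1) (ℓ k), γ k i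
      with hNdef
    set Q : ℕ := ∏ i ∈ Finset.Ico j (ℓ k), γ k i with hQdef
    have hNQ : N < Q := mixedRadix_lt (γ k) (a k) j (ℓ k) (fun i h1 h2 => ha_lt k i h2)
    have hsplit : c k = M + N := by
      rw [ha_sum k, hMdef, hNdef, Finset.range_eq_Ico, Finset.range_eq_Ico]
      exact (Finset.sum_Ico_consecutive (fun j' => a k j' * ∏ i ∈ Finset.Ico (j' + 1) (ℓ k), γ k i) (Nat.zero_le j) hjlt.le).symm
    have hPj := hγpos k j hjlt.le
    have hqR : (∏ i ∈ Finset.range j, (γ k i : ℝ)) * (Q : ℝ) = (δ : ℝ) := by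
      have := congrArg (Nat.cast : ℕ → ℝ) (hQ k j hjlt.le)
      push_cast at this
      rw [hQdef]
      push_cast
      exact this
    have hQpos : (0 : ℝ) < (Q : ℝ) := by
      have : 0 < Q := by
        rw [hQdef]
        apply Finset.prod_pos
        intro i hi
        have := hγ2 k i (Finset.mem_Ico.mp hi).2
        omega
      exact_mod_cast this
    have hone : 1 / ((δ : ℝ) ^ k * ∏ i ∈ Finset.range j, (γ k i : ℝ))
        = (Q : ℝ) / (δ : ℝ) ^ (k + 1) := by
      rw [div_eq_div_iff (by positivity) (by positivity)]
      rw [pow_succ]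
      linear_combination (-((δ : ℝ) ^ k)) * hqR
    rw [hone]
    rw [sub_lt_iff_lt_add]
    rcases Nat.eq_zero_or_pos j with hj0 | hj0
    · subst hj0
      have hk1 : 1 ≤ k := by
        by_contra h
        push_neg at h
        interval_cases k
        · rw [hL0] at hm; omega
      have hQδ : (Q : ℝ) = (δ : ℝ) := by
        have : (∏ i ∈ Finset.range 0, (γ k i : ℝ)) = 1 := by simp
        rw [this, one_mul] at hqR
        exact hqR
      have hM0 : M = 0 := by simp [hMdef]
      rw [hM0, hQδ]
      have := hScineq k hk1
      have hpow : (δ : ℝ) / (δ : ℝ) ^ (k + 1) = 1 / (δ : ℝ) ^ k := by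
        rw [div_eq_div_iff (by positivity) (by positivity), pow_succ]
        ring
      rw [hpow, hScdef]
      have h7 : (1 : ℝ) / (δ : ℝ) ^ k = ((δ : ℝ) ^ k)⁻¹ := one_div _
      have h8 : (0 : ℝ) / (δ : ℝ) ^ (k + 1) = 0 := zero_div _
      push_cast
      linarith
    · have := hScineq (k + 1) (by omega)
      rw [Finset.sum_range_succ] at this
      have hle : ((c k : ℝ) + 1) ≤ (M : ℝ) + (Q : ℝ) := by
        have : c k + 1 ≤ M + Q := by omega
        exact_mod_cast this
      have hpospow : (0 : ℝ) < (δ : ℝ) ^ (k + 1) := by positivity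
      have h4 : ((c k : ℝ) + 1) / (δ : ℝ) ^ (k + 1) ≤ ((M : ℝ) + (Q : ℝ)) / (δ : ℝ) ^ (k + 1) := by
        gcongr
      have h5 : (c k : ℝ) / (δ : ℝ) ^ (k + 1) + 1 / (δ : ℝ) ^ (k + 1)
          = ((c k : ℝ) + 1) / (δ : ℝ) ^ (k + 1) := by ring
      have h6 : ((M : ℝ) + (Q : ℝ)) / (δ : ℝ) ^ (k + 1)
          = (M : ℝ) / (δ : ℝ) ^ (k + 1) + (Q : ℝ) / (δ : ℝ) ^ (k + 1) := by ring
      linarith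
end
end

section
/- Let B = (β_n)_{n≥0} be a Cantor real base and let r ∈ [0,1]. Define a_n := ⌊β_n · (T_{β_{n−1}} ∘ ⋯ ∘ T_{β_0})(r)⌋ for all n ≥ 0 (so a_0 = ⌊β_0 r⌋). Then Σ_{n≥0} a_n/(β_0⋯β_n) = r, for every ℓ ≥ 1 one has Σ_{n≥ℓ} a_n/(β_0⋯β_n) < 1/(β_0⋯β_{ℓ−1}), and (a_n) is lexicographically maximal among all sequences of non-negative integers whose B-valuation equals r. -/
noncomputable section

/-- The `β`-transformation `T_β(x) = βx − ⌊βx⌋`. -/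
def Tmap (β x : ℝ) : ℝ := β * x - ⌊β * x⌋

/-- `iterT B n r = (T_{β_{n−1}} ∘ ⋯ ∘ T_{β_0})(r)`. -/
def iterT (B : ℕ → ℝ) : ℕ → ℝ → ℝ
  | 0, r => r
  | n + 1, r => Tmap (B n) (iterT B n r)

/-- The `n`-th greedy digit `a_n = ⌊β_n · (T_{β_{n−1}} ∘ ⋯ ∘ T_{β_0})(r)⌋`. -/
def greedyDigit (B : ℕ → ℝ) (r : ℝ) (n : ℕ) : ℤ := ⌊B n * iterT B n r⌋

lemma iterT_succ_eq_fract (B : ℕ → ℝ) (r : ℝ) (n : ℕ) :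
    iterT B (n + 1) r = Int.fract (B n * iterT B n r) := rfl

lemma iterT_nonneg (B : ℕ → ℝ) (r : ℝ) (hr0 : 0 ≤ r) : ∀ n, 0 ≤ iterT B n r
  | 0 => hr0
  | n + 1 => by rw [iterT_succ_eq_fract]; exact Int.fract_nonneg _

lemma iterT_succ_lt_one (B : ℕ → ℝ) (r : ℝ) (n : ℕ) : iterT B (n + 1) r < 1 := by
  rw [iterT_succ_eq_fract]; exact Int.fract_lt_one _

lemma iterT_le_one (B : ℕ → ℝ) (r : ℝ) (hr1 : r ≤ 1) : ∀ n, iterT B n r ≤ 1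
  | 0 => hr1
  | n + 1 => (iterT_succ_lt_one B r n).le

lemma prod_pos' (B : ℕ → ℝ) (hB : ∀ n, 1 < B n) (N : ℕ) :
    (0 : ℝ) < ∏ i ∈ Finset.range N, B i :=
  Finset.prod_pos fun i _ => lt_trans one_pos (hB i)

lemma greedy_partial (B : ℕ → ℝ) (hB : ∀ n, 1 < B n) (r : ℝ) (N : ℕ) :
    ∑ n ∈ Finset.range N, (greedyDigit B r n : ℝ) / ∏ i ∈ Finset.range (n + 1), B i
      = r - iterT B N r / ∏ i ∈ Finset.range N, B i := by
  induction N with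
  | zero => simp [iterT]
  | succ N ih =>
    rw [Finset.sum_range_succ, ih]
    have hP : (0:ℝ) < ∏ i ∈ Finset.range N, B i := prod_pos' B hB N
    have hP1 : (0:ℝ) < ∏ i ∈ Finset.range (N + 1), B i := prod_pos' B hB (N + 1)
    have hiter : iterT B (N + 1) r = B N * iterT B N r - (greedyDigit B r N : ℝ) := rfl
    rw [hiter, Finset.prod_range_succ] at *
    have hBN : (0:ℝ) < B N := lt_trans one_pos (hB N)
    field_simp
    ring

lemma greedyDigit_nonneg (B : ℕ → ℝ) (hB : ∀ n, 1 < B n) (r : ℝ) (hr0 : 0 ≤ r) (n : ℕ) :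
    0 ≤ greedyDigit B r n :=
  Int.floor_nonneg.mpr (mul_nonneg (lt_trans one_pos (hB n)).le (iterT_nonneg B r hr0 n))

/-- For a Cantor real base `B` and `r ∈ [0,1]`, the digits
`a_n = ⌊β_n·(T_{β_{n−1}} ∘ ⋯ ∘ T_{β_0})(r)⌋` form a `B`-representation of `r`, satisfy
the greedy tail inequalities, and are lexicographically maximal among all
`B`-representations of `r` by non-negative integers. -/
theorem greedy_algorithm_properties
    (B : ℕ → ℝ) (hB : ∀ n, 1 < B n)
    (hBprod : Filter.Tendsto (fun N => ∏ i ∈ Finset.range N, B i)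
      Filter.atTop Filter.atTop)
    (r : ℝ) (hr0 : 0 ≤ r) (hr1 : r ≤ 1) :
    HasSum (fun n => (greedyDigit B r n : ℝ) / ∏ i ∈ Finset.range (n + 1), B i) r ∧
    (∀ ℓ : ℕ, 1 ≤ ℓ →
      (∑' n : ℕ, (greedyDigit B r (n + ℓ) : ℝ) / ∏ i ∈ Finset.range (n + ℓ + 1), B i)
        < 1 / ∏ i ∈ Finset.range ℓ, B i) ∧
    (∀ b : ℕ → ℕ,
      HasSum (fun n => (b n : ℝ) / ∏ i ∈ Finset.range (n + 1), B i) r →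
      (∀ n, (b n : ℤ) = greedyDigit B r n) ∨
      ∃ k, (∀ i < k, (b i : ℤ) = greedyDigit B r i) ∧ (b k : ℤ) < greedyDigit B r k) := by
  set f : ℕ → ℝ := fun n => (greedyDigit B r n : ℝ) / ∏ i ∈ Finset.range (n + 1), B i with hf
  have hPpos := prod_pos' B hB
  have hfnonneg : ∀ n, 0 ≤ f n := fun n =>
    div_nonneg (by exact_mod_cast greedyDigit_nonneg B hB r hr0 n) (hPpos (n + 1)).le
  have hpartial : ∀ N, ∑ n ∈ Finset.range N, f n
      = r - iterT B N r / ∏ i ∈ Finset.range N, B i := greedy_partial B hB r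
  -- tendsto of partial sums to r
  have hinv : Filter.Tendsto (fun N => (∏ i ∈ Finset.range N, B i)⁻¹)
      Filter.atTop (nhds 0) := hBprod.inv_tendsto_atTop
  have htend0 : Filter.Tendsto (fun N => iterT B N r / ∏ i ∈ Finset.range N, B i)
      Filter.atTop (nhds 0) := by
    apply squeeze_zero (fun N => div_nonneg (iterT_nonneg B r hr0 N) (hPpos N).le)
      (g := fun N => (∏ i ∈ Finset.range N, B i)⁻¹) _ hinv
    intro N
    rw [div_eq_mul_inv]
    exact mul_le_of_le_one_left (inv_nonneg.mpr (hPpos N).le) (iterT_le_one B r hr1 N)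
  have htend : Filter.Tendsto (fun N => ∑ n ∈ Finset.range N, f n)
      Filter.atTop (nhds r) := by
    simp only [hpartial]
    simpa using Filter.Tendsto.sub (tendsto_const_nhds (x := r)) htend0
  have hsummable : Summable f := by
    apply summable_of_sum_range_le (c := r) hfnonneg
    intro N
    rw [hpartial N]
    have := div_nonneg (iterT_nonneg B r hr0 N) (hPpos N).le
    linarith
  have hsum : HasSum f r := by
    have h1 := hsummable.hasSum
    have h2 : (∑' n, f n) = r := tendsto_nhds_unique h1.tendsto_sum_nat htend
    rwa [h2] at h1
  refine ⟨hsum, ?_, ?_⟩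
  · -- tail inequality
    intro ℓ hℓ
    have htail := Summable.sum_add_tsum_nat_add ℓ hsummable
    rw [hsum.tsum_eq, hpartial ℓ] at htail
    have hlt : iterT B ℓ r < 1 := by
      obtain ⟨m, rfl⟩ := Nat.exists_eq_add_of_le hℓ
      rw [Nat.add_comm]
      exact iterT_succ_lt_one B r m
    have : (∑' n : ℕ, f (n + ℓ)) = iterT B ℓ r / ∏ i ∈ Finset.range ℓ, B i := by
      linarith
    rw [show (∑' n : ℕ, (greedyDigit B r (n + ℓ) : ℝ) / ∏ i ∈ Finset.range (n + ℓ + 1), B i)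
        = ∑' n : ℕ, f (n + ℓ) from rfl, this]
    exact (div_lt_div_iff_of_pos_right (hPpos ℓ)).mpr hlt
  · -- lexicographic maximality
    intro b hb
    by_cases hall : ∀ n, (b n : ℤ) = greedyDigit B r n
    · exact Or.inl hall
    · right
      push_neg at hall
      classical
      let k := Nat.find hall
      have hk : (b k : ℤ) ≠ greedyDigit B r k := Nat.find_spec hall
      have hik : ∀ i < k, (b i : ℤ) = greedyDigit B r i := by
        intro i hi
        by_contra h
        exact absurd hi (not_lt.mpr (Nat.find_le h))
      refine ⟨k, hik, ?_⟩
      by_contra hlt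
      push_neg at hlt
      have hgt : greedyDigit B r k < (b k : ℤ) := lt_of_le_of_ne hlt (Ne.symm hk)
      set g : ℕ → ℝ := fun n => (b n : ℝ) / ∏ i ∈ Finset.range (n + 1), B i with hg
      have hgnonneg : ∀ n, 0 ≤ g n := fun n =>
        div_nonneg (Nat.cast_nonneg _) (hPpos (n + 1)).le
      have hlow : ∑ n ∈ Finset.range (k + 1), g n ≤ r :=
        sum_le_hasSum _ (fun i _ => hgnonneg i) hb
      have hsum_eq : ∑ n ∈ Finset.range k, g n = ∑ n ∈ Finset.range k, f n := by
        apply Finset.sum_congr rfl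
        intro i hi
        have := hik i (Finset.mem_range.mp hi)
        simp only [hg, hf]
        congr 1
        exact_mod_cast congrArg (fun z : ℤ => (z : ℝ)) this
      have hbk : ((greedyDigit B r k : ℝ) + 1) ≤ (b k : ℝ) := by
        have : greedyDigit B r k + 1 ≤ (b k : ℤ) := hgt
        exact_mod_cast this
      have hP1 := hPpos (k + 1)
      have hlow2 : ∑ n ∈ Finset.range k, f n
          + ((greedyDigit B r k : ℝ) + 1) / ∏ i ∈ Finset.range (k + 1), B i ≤ r := by
        have h1 : ((greedyDigit B r k : ℝ) + 1) / ∏ i ∈ Finset.range (k + 1), B i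
            ≤ (b k : ℝ) / ∏ i ∈ Finset.range (k + 1), B i := by gcongr
        calc ∑ n ∈ Finset.range k, f n
              + ((greedyDigit B r k : ℝ) + 1) / ∏ i ∈ Finset.range (k + 1), B i
            ≤ ∑ n ∈ Finset.range k, g n
              + (b k : ℝ) / ∏ i ∈ Finset.range (k + 1), B i := by
                rw [hsum_eq]; exact add_le_add_right h1 _
          _ = ∑ n ∈ Finset.range (k + 1), g n := by
              rw [Finset.sum_range_succ]
          _ ≤ r := hlow
      have hup : r < ∑ n ∈ Finset.range k, f n
          + ((greedyDigit B r k : ℝ) + 1) / ∏ i ∈ Finset.range (k + 1), B i := by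
        have h1 := hpartial (k + 1)
        rw [Finset.sum_range_succ] at h1
        have h2 : 0 < (1 : ℝ) - iterT B (k + 1) r := by
          linarith [iterT_succ_lt_one B r k]
        have h3 : iterT B (k + 1) r / ∏ i ∈ Finset.range (k + 1), B i
            < 1 / ∏ i ∈ Finset.range (k + 1), B i :=
          (div_lt_div_iff_of_pos_right hP1).mpr (iterT_succ_lt_one B r k)
        have h4 : ((greedyDigit B r k : ℝ) + 1) / ∏ i ∈ Finset.range (k + 1), B i
            = f k + 1 / ∏ i ∈ Finset.range (k + 1), B i := by
          rw [hf]; rw [add_div]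
        rw [h4]
        linarith
      exact absurd hlow2 (not_le.mpr hup)
end
end

section
/- Let B = (β_n)_{n≥0} be a Cantor real base and let r ∈ (0,1]. Then the limit d*_B(r) := lim_{z → r⁻} d_B(z) of greedy B-expansions (in the product topology on digit sequences) exists, and its n-th digit equals ⌈β_n · (T*_{β_{n−1}} ∘ ⋯ ∘ T*_{β_0})(r) − 1⌉ for every n ≥ 0 (in particular its 0-th digit is ⌈β_0 r − 1⌉). -/
noncomputable section

/-- The quasi-greedy transformation `T*_β`, with `T*_β(0) = 0` and
`T*_β(x) = βx − ⌈βx − 1⌉` for `x ≠ 0`. -/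
def Tstar (β x : ℝ) : ℝ := if x = 0 then 0 else β * x - ⌈β * x - 1⌉

/-- `iterTstar B n r = (T*_{β_{n−1}} ∘ ⋯ ∘ T*_{β_0})(r)`. -/
def iterTstar (B : ℕ → ℝ) : ℕ → ℝ → ℝ
  | 0, r => r
  | n + 1, r => Tstar (B n) (iterTstar B n r)

/-- The `n`-th quasi-greedy digit `⌈β_n·(T*_{β_{n−1}} ∘ ⋯ ∘ T*_{β_0})(r) − 1⌉`. -/
def quasiGreedyDigit (B : ℕ → ℝ) (r : ℝ) (n : ℕ) : ℤ := ⌈B n * iterTstar B n r - 1⌉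

open Filter Set Topology

/-- If `y → x` from the left with `0 < x`, then eventually `⌊β y⌋ = ⌈β x − 1⌉`. -/
lemma floor_ev {β x : ℝ} (hβ : 1 < β) (hx : 0 < x) {l : Filter ℝ} {f : ℝ → ℝ}
    (ht : Tendsto f l (nhdsWithin x (Set.Iio x))) :
    ∀ᶠ z in l, ⌊β * f z⌋ = ⌈β * x - 1⌉ := by
  have hβ0 : (0 : ℝ) < β := lt_trans one_pos hβ
  set c : ℤ := ⌈β * x - 1⌉ with hc
  have hclt : (c : ℝ) < β * x := by
    have := Int.ceil_lt_add_one (β * x - 1); rw [← hc] at this; linarith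
  have hcge : β * x - 1 ≤ (c : ℝ) := by rw [hc]; exact Int.le_ceil _
  have h1 : ∀ᶠ z in l, f z ∈ Set.Iio x := ht self_mem_nhdsWithin
  have h2 : ∀ᶠ z in l, f z ∈ Set.Ioi ((c : ℝ) / β) := by
    apply ht (nhdsWithin_le_nhds (Ioi_mem_nhds _))
    rw [div_lt_iff₀ hβ0]; linarith [hclt]
  filter_upwards [h1, h2] with z h1 h2
  rw [Set.mem_Iio] at h1; rw [Set.mem_Ioi, div_lt_iff₀ hβ0] at h2
  rw [Int.floor_eq_iff]
  constructor
  · nlinarith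
  · push_cast
    nlinarith [mul_lt_mul_of_pos_left h1 hβ0]

lemma key (B : ℕ → ℝ) (hB : ∀ n, 1 < B n) (r : ℝ) (hr0 : 0 < r) :
    ∀ n, 0 < iterTstar B n r ∧
      Tendsto (fun z : ℝ => iterT B n z) (nhdsWithin r (Set.Iio r))
        (nhdsWithin (iterTstar B n r) (Set.Iio (iterTstar B n r))) := by
  intro n
  induction n with
  | zero => exact ⟨hr0, by simp only [iterT, iterTstar]; exact tendsto_id⟩
  | succ n ih =>
    obtain ⟨hx, ht⟩ := ih
    set x := iterTstar B n r with hxdef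
    set β := B n with hβdef
    have hβ : 1 < β := hB n
    have hβ0 : (0 : ℝ) < β := lt_trans one_pos hβ
    set c : ℤ := ⌈β * x - 1⌉ with hc
    have hclt : (c : ℝ) < β * x := by
      have := Int.ceil_lt_add_one (β * x - 1); rw [← hc] at this; linarith
    have hcge : β * x - 1 ≤ (c : ℝ) := by rw [hc]; exact Int.le_ceil _
    have hxs : iterTstar B (n + 1) r = β * x - c := by
      show Tstar β x = _
      rw [Tstar, if_neg hx.ne', hc]
    have hfl := floor_ev hβ hx ht
    have hfloor : ∀ᶠ z in nhdsWithin r (Set.Iio r),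
        iterT B (n + 1) z = β * iterT B n z - c := by
      filter_upwards [hfl] with z hz
      show Tmap β (iterT B n z) = _
      rw [Tmap, hz, hc]
    have h1 : ∀ᶠ z in nhdsWithin r (Set.Iio r), iterT B n z < x := by
      filter_upwards [ht self_mem_nhdsWithin] with z hz using hz
    refine ⟨by rw [hxs]; linarith, ?_⟩
    rw [hxs, tendsto_nhdsWithin_iff]
    constructor
    · refine Tendsto.congr' (hfloor.mono fun z h => h.symm) ?_
      exact (tendsto_const_nhds.mul (ht.mono_right nhdsWithin_le_nhds)).sub tendsto_const_nhds
    · filter_upwards [hfloor, h1] with z hz h1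
      rw [Set.mem_Iio, hz]
      have := mul_lt_mul_of_pos_left h1 hβ0
      linarith

/-- For a Cantor real base `B` and `r ∈ (0,1]`, the greedy expansions `d_B(z)` converge,
as `z → r⁻` and in the product topology on digit sequences, to the sequence of
quasi-greedy digits of `r`; in particular the limit `d*_B(r)` exists and its `n`-th digit
is `⌈β_n·(T*_{β_{n−1}} ∘ ⋯ ∘ T*_{β_0})(r) − 1⌉`. -/
theorem quasiGreedy_is_left_limit_of_greedy
    (B : ℕ → ℝ) (hB : ∀ n, 1 < B n)
    (hBprod : Filter.Tendsto (fun N => ∏ i ∈ Finset.range N, B i)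
      Filter.atTop Filter.atTop)
    (r : ℝ) (hr0 : 0 < r) (hr1 : r ≤ 1) :
    Filter.Tendsto (fun z : ℝ => greedyDigit B z) (nhdsWithin r (Set.Iio r))
      (nhds (quasiGreedyDigit B r)) := by
  rw [tendsto_pi_nhds]
  intro n
  obtain ⟨hx, ht⟩ := key B hB r hr0 n
  have hev : ∀ᶠ z in nhdsWithin r (Set.Iio r),
      greedyDigit B z n = quasiGreedyDigit B r n := by
    filter_upwards [floor_ev (hB n) hx ht] with z hz
    rw [greedyDigit, quasiGreedyDigit, hz]
  exact tendsto_const_nhds.congr' (hev.mono fun z h => h.symm)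
end
end

section
/- Let δ be an algebraic integer of degree d and let E be a finite set of Pisot numbers, each of algebraic degree d and each belonging to ℤ[δ]. Then for every r ∈ ℚ(δ) ∩ [0,1], both the greedy reachable set O_E(r) and the quasi-greedy reachable set O*_E(r) are finite (i.e., the transducers T_{E,r} and T*_{E,r} are finite). Consequently, for every Cantor real base B ∈ E^ℕ, the expansions d_B(r) and d*_B(r) are produced by a single finite letter-to-letter transducer reading B. -/
noncomputable section

/-- `TList [β_0,…,β_{ℓ−1}] r = (T_{β_{ℓ−1}} ∘ ⋯ ∘ T_{β_0})(r)`. -/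
def TList (l : List ℝ) (r : ℝ) : ℝ := l.foldl (fun x β => Tmap β x) r

/-- Quasi-greedy analogue of `TList`. -/
def TstarList (l : List ℝ) (r : ℝ) : ℝ := l.foldl (fun x β => Tstar β x) r

/-- The greedy reachable set `O_E(r)`: the state set of the transducer `T_{E,r}`. -/
def greedyReach (E : Set ℝ) (r : ℝ) : Set ℝ :=
  {x | ∃ l : List ℝ, (∀ β ∈ l, β ∈ E) ∧ TList l r = x}

/-- The quasi-greedy reachable set `O*_E(r)`: the state set of the transducer `T*_{E,r}`. -/
def quasiGreedyReach (E : Set ℝ) (r : ℝ) : Set ℝ :=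
  {x | ∃ l : List ℝ, (∀ β ∈ l, β ∈ E) ∧ TstarList l r = x}

/-- A Pisot number: a real algebraic integer `β > 1` all of whose Galois conjugates
other than `β` itself have absolute value `< 1`. -/
def IsPisot (β : ℝ) : Prop :=
  1 < β ∧ IsIntegral ℤ β ∧
    ∀ z : ℂ, Polynomial.aeval z (minpoly ℚ β) = 0 → z ≠ (β : ℂ) → ‖z‖ < 1


open IntermediateField Polynomial

/-- Auxiliary: elements of ℝ coming from a number field `K ⊆ ℝ` whose `q`-multiple is an
algebraic integer with all conjugates bounded form a finite set. -/
theorem aux_finite (K : IntermediateField ℚ ℝ) [FiniteDimensional ℚ K]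
    (q : ℤ) (hq : q ≠ 0) (B : ℝ) :
    {x : ℝ | ∃ y : K, algebraMap K ℝ y = x ∧ IsIntegral ℤ ((q : K) * y) ∧
      ∀ φ : K →+* ℂ, ‖φ y‖ ≤ B}.Finite := by
  haveI : NumberField K := ⟨⟩
  have hfin := NumberField.Embeddings.finite_of_norm_le K ℂ (|(q : ℝ)| * B)
  refine ((hfin.image (fun z : K => algebraMap K ℝ z / (q : ℝ)))).subset ?_
  rintro x ⟨y, rfl, hint, hbd⟩
  refine ⟨(q : K) * y, ⟨hint, fun φ => ?_⟩, ?_⟩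
  · rw [map_mul, map_intCast]
    rw [norm_mul]
    have h : ‖((q : ℤ) : ℂ)‖ = |(q : ℝ)| := by
      simp
    rw [h]
    exact mul_le_mul_of_nonneg_left (hbd φ) (abs_nonneg _)
  · show algebraMap K ℝ ((q : K) * y) / (q : ℝ) = algebraMap K ℝ y
    rw [map_mul, map_intCast]
    field_simp

set_option maxHeartbeats 4000000 in
/-- Main theorem: if `δ` is an algebraic integer of degree `d` and `E` is a finite set of
Pisot numbers of degree `d` belonging to `ℤ[δ]`, then for every `r ∈ ℚ(δ) ∩ [0,1]` both
the greedy and the quasi-greedy reachable sets are finite, i.e. the transducers `T_{E,r}`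
and `T*_{E,r}` are finite; consequently a single finite letter-to-letter transducer
produces `d_B(r)` and `d*_B(r)` for every Cantor real base `B ∈ E^ℕ`. -/
theorem main_transducers_finite
    (d : ℕ) (δ : ℝ) (hδint : IsIntegral ℤ δ) (hδdeg : (minpoly ℚ δ).natDegree = d)
    (E : Finset ℝ)
    (hEpisot : ∀ β ∈ E, IsPisot β)
    (hEdeg : ∀ β ∈ E, (minpoly ℚ β).natDegree = d)
    (hEZδ : ∀ β ∈ E, ∃ P : Polynomial ℤ, Polynomial.aeval δ P = β)
    (r : ℝ) (hrQδ : ∃ P : Polynomial ℚ, Polynomial.aeval δ P = r)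
    (hr0 : 0 ≤ r) (hr1 : r ≤ 1) :
    (greedyReach (E : Set ℝ) r).Finite ∧ (quasiGreedyReach (E : Set ℝ) r).Finite := by
  classical
  set K : IntermediateField ℚ ℝ := IntermediateField.adjoin ℚ {δ} with hKdef
  have hδQ : IsIntegral ℚ δ := hδint.tower_top
  haveI : FiniteDimensional ℚ K := IntermediateField.adjoin.finiteDimensional hδQ
  haveI : NumberField K := ⟨⟩
  have hδK : δ ∈ K := IntermediateField.mem_adjoin_simple_self ℚ δ
  set gδ : K := ⟨δ, hδK⟩ with hgδ
  have hgδval : algebraMap K ℝ gδ = δ := rfl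
  have hδKint : IsIntegral ℤ gδ := by
    rw [← isIntegral_algebraMap_iff (algebraMap K ℝ).injective]
    exact hδint
  -- finrank
  have hfinrank : Module.finrank ℚ K = d := by
    rw [hKdef]
    rw [IntermediateField.adjoin.finrank hδQ, hδdeg]
  -- aeval membership in K for rational polys
  have haevalK : ∀ P : Polynomial ℚ, algebraMap K ℝ (Polynomial.aeval gδ P) = Polynomial.aeval δ P := by
    intro P
    rw [← hgδval]
    exact (Polynomial.aeval_algHom_apply (IsScalarTower.toAlgHom ℚ K ℝ) gδ P).symm
  -- integrality of aeval over ℤ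
  have haevalint : ∀ Q : Polynomial ℤ, IsIntegral ℤ (Polynomial.aeval gδ Q) := by
    intro Q
    have h1 : Polynomial.aeval gδ Q =
        ((Polynomial.aeval (⟨gδ, hδKint⟩ : integralClosure ℤ K) Q : integralClosure ℤ K) : K) := by
      rw [Polynomial.aeval_subalgebra_coe]
    rw [h1]
    exact (Polynomial.aeval (⟨gδ, hδKint⟩ : integralClosure ℤ K) Q).2
  -- membership of E elements and r in K
  have hEK : ∀ β ∈ E, β ∈ K := by
    intro β hβ
    obtain ⟨Q, hQ⟩ := hEZδ β hβ
    have : algebraMap K ℝ (Polynomial.aeval gδ (Q.map (algebraMap ℤ ℚ))) = β := by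
      rw [haevalK, Polynomial.aeval_map_algebraMap, hQ]
    exact this ▸ (Polynomial.aeval gδ (Q.map (algebraMap ℤ ℚ))).2
  set g : ℝ → K := fun β => if h : β ∈ K then ⟨β, h⟩ else 0 with hgdef
  have hg : ∀ β ∈ E, algebraMap K ℝ (g β) = β := by
    intro β hβ
    simp only [hgdef, dif_pos (hEK β hβ)]
    rfl
  have hgint : ∀ β ∈ E, IsIntegral ℤ (g β) := by
    intro β hβ
    rw [← isIntegral_algebraMap_iff (algebraMap K ℝ).injective, hg β hβ]
    exact (hEpisot β hβ).2.1
  -- r in K with denominator q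
  obtain ⟨P, hP⟩ := hrQδ
  set rK : K := Polynomial.aeval gδ P with hrKdef
  have hrK : algebraMap K ℝ rK = r := by rw [hrKdef, haevalK, hP]
  obtain ⟨b, hb⟩ := IsLocalization.integerNormalization_map_to_map (nonZeroDivisors ℤ) P
  set q : ℤ := (b : ℤ) with hqdef
  have hq0 : q ≠ 0 := nonZeroDivisors.coe_ne_zero b
  have hqint : IsIntegral ℤ ((q : K) * rK) := by
    have h1 : Polynomial.aeval gδ (IsLocalization.integerNormalization (nonZeroDivisors ℤ) P) = (q : K) * rK := by
      rw [← Polynomial.aeval_map_algebraMap ℚ gδ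
        (IsLocalization.integerNormalization (nonZeroDivisors ℤ) P), hb, hrKdef]
      rw [zsmul_eq_mul, map_mul]
      congr 1
      simp
    rw [← h1]
    exact haevalint _
  -- the real embedding
  set ι : K →+* ℂ := Complex.ofRealHom.comp (algebraMap K ℝ) with hιdef
  have hιnorm : ∀ y : K, ‖ι y‖ = |algebraMap K ℝ y| := by
    intro y
    simp [hιdef, Complex.norm_real]
  -- conjugates of Pisot elements are small
  have hconj : ∀ φ : K →+* ℂ, φ ≠ ι → ∀ β ∈ E, ‖φ (g β)‖ < 1 := by
    intro φ hφ β hβ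
    have hβK := hEK β hβ
    have hgβ : algebraMap K ℝ (g β) = β := hg β hβ
    have hmp : minpoly ℚ (g β) = minpoly ℚ β := by
      conv_rhs => rw [← hgβ]
      exact (minpoly.algebraMap_eq (algebraMap K ℝ).injective (g β)).symm
    have hroot : Polynomial.aeval (φ (g β)) (minpoly ℚ β) = 0 := by
      rw [← hmp]
      have h := Polynomial.aeval_algHom_apply φ.toRatAlgHom (g β) (minpoly ℚ (g β))
      rw [minpoly.aeval, map_zero] at h
      exact h
    have hne : φ (g β) ≠ (β : ℂ) := by
      intro heq
      apply hφ
      -- primitive element: g β generates K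
      have hdegβ : (minpoly ℚ (g β)).natDegree = d := by rw [hmp]; exact hEdeg β hβ
      have htop : (IntermediateField.adjoin ℚ {g β} : IntermediateField ℚ K) = ⊤ := by
        rw [Field.primitive_element_iff_minpoly_natDegree_eq, hdegβ, hfinrank]
      have hA : ∀ x : K, ((minpoly ℚ x).map (algebraMap ℚ ℂ)).Splits := fun x =>
        IsAlgClosed.splits _
      have hinj := (Field.primitive_element_iff_algHom_eq_of_eval' ℚ ℂ hA (g β)).mp htop
      have heq2 : φ.toRatAlgHom (g β) = ι.toRatAlgHom (g β) := by
        show φ (g β) = ι (g β)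
        rw [heq, hιdef]
        simp [hgβ]
      have := hinj heq2
      rw [← RingHom.toRatAlgHom_toRingHom φ, ← RingHom.toRatAlgHom_toRingHom ι, this]
    have := (hEpisot β hβ).2.2 (φ (g β)) hroot hne
    exact this
  -- constants
  obtain ⟨M, hM⟩ := E.exists_le
  set T : Finset ℝ := insert 0 ((Finset.univ ×ˢ E).image
    fun p : (K →+* ℂ) × ℝ => if p.1 = ι then 0 else ‖p.1 (g p.2)‖) with hTdef
  have hTne : (0:ℝ) ∈ T := Finset.mem_insert_self _ _
  set c : ℝ := T.max' ⟨0, hTne⟩ with hcdef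
  have hc0 : 0 ≤ c := Finset.le_max' _ 0 hTne
  have hc1 : c < 1 := by
    rw [hcdef]
    refine (Finset.max'_lt_iff _ _).mpr ?_
    intro x hx
    rw [hTdef, Finset.mem_insert] at hx
    rcases hx with h | h
    · simp [h]
    · obtain ⟨p, hp, rfl⟩ := Finset.mem_image.mp h
      rw [Finset.mem_product] at hp
      by_cases hpe : p.1 = ι
      · simp [hpe]
      · rw [if_neg hpe]
        exact hconj p.1 hpe p.2 hp.2
  have hc : ∀ φ : K →+* ℂ, φ ≠ ι → ∀ β ∈ E, ‖φ (g β)‖ ≤ c := by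
    intro φ hφ β hβ
    refine Finset.le_max' _ _ ?_
    rw [hTdef, Finset.mem_insert]
    right
    refine Finset.mem_image.mpr ⟨⟨φ, β⟩, ?_, ?_⟩
    · exact Finset.mem_product.mpr ⟨Finset.mem_univ _, hβ⟩
    · simp [hφ]
  obtain ⟨R₀, hR₀⟩ := ((Finset.univ : Finset (K →+* ℂ)).image fun φ => ‖φ rK‖).exists_le
  have hR₀' : ∀ φ : K →+* ℂ, ‖φ rK‖ ≤ R₀ := fun φ =>
    hR₀ _ (Finset.mem_image.mpr ⟨φ, Finset.mem_univ _, rfl⟩)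
  set B : ℝ := max 1 (max R₀ (M / (1 - c))) with hBdef
  have hB1 : (1:ℝ) ≤ B := le_max_left _ _
  have hB0 : (0:ℝ) ≤ B := by linarith
  have hBR : R₀ ≤ B := le_trans (le_max_left _ _) (le_max_right _ _)
  have hBM : M / (1 - c) ≤ B := le_trans (le_max_right _ _) (le_max_right _ _)
  have hMle : M ≤ B * (1 - c) := by
    rw [div_le_iff₀ (by linarith)] at hBM
    exact hBM
  have hstepB : c * B + M ≤ B := by nlinarith
  -- the invariant
  set Good : ℝ → Prop := fun x => 0 ≤ x ∧ x ≤ 1 ∧ ∃ y : K, algebraMap K ℝ y = x ∧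
    IsIntegral ℤ ((q : K) * y) ∧ ∀ φ : K →+* ℂ, ‖φ y‖ ≤ B with hGooddef
  have hGr : Good r := by
    refine ⟨hr0, hr1, rK, hrK, hqint, fun φ => le_trans (hR₀' φ) hBR⟩
  -- generic step
  have hstep : ∀ β ∈ E, ∀ x : ℝ, Good x → ∀ k : ℤ, (0:ℝ) ≤ (k:ℝ) → (k:ℝ) ≤ β →
      0 ≤ β * x - k → β * x - k ≤ 1 → Good (β * x - k) := by
    intro β hβ x hx k hk0 hkβ h0' h1'
    obtain ⟨hx0, hx1, y, hy, hyint, hybd⟩ := hx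
    have hy' : algebraMap K ℝ (g β * y - (k : K)) = β * x - k := by
      rw [map_sub, map_mul, hg β hβ, hy, map_intCast]
    refine ⟨h0', h1', g β * y - (k : K), hy', ?_, ?_⟩
    · have h2 : (q : K) * (g β * y - (k : K)) = g β * ((q : K) * y) - ((q * k : ℤ) : K) := by
        push_cast; ring
      rw [h2]
      refine ((hgint β hβ).mul hyint).sub ?_
      rw [← eq_intCast (algebraMap ℤ K) (q * k)]
      exact isIntegral_algebraMap
    · intro φ
      by_cases hφ : φ = ι
      · subst hφ
        rw [hιnorm, hy', abs_le]
        constructor <;> linarith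
      · have hb1 : ‖φ (g β * y - (k : K))‖ ≤ ‖φ (g β)‖ * ‖φ y‖ + ‖((k:ℤ) : ℂ)‖ := by
          rw [map_sub, map_mul]
          exact le_trans (norm_sub_le _ _) (by rw [norm_mul, map_intCast])
        have hk : ‖((k:ℤ) : ℂ)‖ = (k : ℝ) := by
          rw [Complex.norm_intCast]
          rw [abs_of_nonneg]
          exact_mod_cast hk0
        have hβM : β ≤ M := hM β hβ
        have hgc := hc φ hφ β hβ
        calc ‖φ (g β * y - (k : K))‖ ≤ ‖φ (g β)‖ * ‖φ y‖ + ‖((k:ℤ) : ℂ)‖ := hb1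
          _ ≤ c * B + M := by
              rw [hk]
              have := mul_le_mul hgc (hybd φ) (norm_nonneg _) hc0
              linarith
          _ ≤ B := hstepB
  -- step lemmas for the two transformations
  have hGmap : ∀ β ∈ E, ∀ x : ℝ, Good x → Good (Tmap β x) := by
    intro β hβ x hx
    have hβ1 : (1:ℝ) < β := (hEpisot β hβ).1
    have hbx0 : 0 ≤ β * x := mul_nonneg (by linarith) hx.1
    show Good (β * x - ⌊β * x⌋)
    refine hstep β hβ x hx ⌊β * x⌋ ?_ ?_ ?_ ?_
    · exact_mod_cast Int.floor_nonneg.mpr hbx0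
    · refine le_trans (Int.floor_le _) ?_
      nlinarith [hx.2.1]
    · have h := Int.fract_nonneg (β * x)
      rw [Int.fract] at h
      linarith
    · have h := (Int.fract_lt_one (β * x)).le
      rw [Int.fract] at h
      linarith
  have hGstar : ∀ β ∈ E, ∀ x : ℝ, Good x → Good (Tstar β x) := by
    intro β hβ x hx
    have hβ1 : (1:ℝ) < β := (hEpisot β hβ).1
    by_cases hx0 : x = 0
    · rw [hx0]
      show Good (if (0:ℝ) = 0 then 0 else _)
      rw [if_pos rfl]
      refine ⟨le_refl _, zero_le_one, 0, map_zero _, ?_, fun φ => ?_⟩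
      · rw [mul_zero]
        exact isIntegral_zero
      · rw [map_zero, norm_zero]
        linarith
    · show Good (if x = 0 then 0 else β * x - ⌈β * x - 1⌉)
      rw [if_neg hx0]
      have hxpos : 0 < x := lt_of_le_of_ne hx.1 (Ne.symm hx0)
      have hbx : 0 < β * x := mul_pos (by linarith) hxpos
      have hle := Int.le_ceil (β * x - 1)
      have hlt := Int.ceil_lt_add_one (β * x - 1)
      have hkR : (-1:ℝ) < (⌈β * x - 1⌉ : ℝ) := by linarith
      have hkZ : (-1:ℤ) < ⌈β * x - 1⌉ := by exact_mod_cast hkR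
      refine hstep β hβ x hx ⌈β * x - 1⌉ ?_ ?_ ?_ ?_
      · have : (0:ℤ) ≤ ⌈β * x - 1⌉ := by omega
        exact_mod_cast this
      · have hxle : β * x ≤ β := by nlinarith [hx.2.1]
        linarith
      · have hxle : (⌈β * x - 1⌉ : ℝ) < β * x := by linarith
        linarith
      · linarith
  -- propagate along lists
  have hkeyG : ∀ l : List ℝ, (∀ β ∈ l, β ∈ (E : Set ℝ)) → ∀ x : ℝ, Good x →
      Good (TList l x) := by
    intro l
    induction l with
    | nil => intro _ x hx; exact hx
    | cons β t ih =>
      intro hl x hx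
      have hβE : β ∈ E := hl β List.mem_cons_self
      exact ih (fun γ hγ => hl γ (List.mem_cons_of_mem _ hγ)) _ (hGmap β hβE x hx)
  have hkeyS : ∀ l : List ℝ, (∀ β ∈ l, β ∈ (E : Set ℝ)) → ∀ x : ℝ, Good x →
      Good (TstarList l x) := by
    intro l
    induction l with
    | nil => intro _ x hx; exact hx
    | cons β t ih =>
      intro hl x hx
      have hβE : β ∈ E := hl β List.mem_cons_self
      exact ih (fun γ hγ => hl γ (List.mem_cons_of_mem _ hγ)) _ (hGstar β hβE x hx)
  -- conclude
  have hfin := aux_finite K q hq0 B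
  constructor
  · refine hfin.subset ?_
    rintro x ⟨l, hl, rfl⟩
    exact (hkeyG l hl r hGr).2.2
  · refine hfin.subset ?_
    rintro x ⟨l, hl, rfl⟩
    exact (hkeyS l hl r hGr).2.2
end
end

section
/- Every real algebraic number field K of degree d (i.e., a subfield K of ℝ with [K:ℚ] = d) contains a Pisot number of algebraic degree d. -/
open NumberField Polynomial Module
set_option maxHeartbeats 1000000
set_option synthInstance.maxHeartbeats 100000


noncomputable section

/-- Degree one case. -/
theorem pisot_two : IsPisot 2 ∧ (minpoly ℚ (2:ℝ)).natDegree = 1 := by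
  have h2 : (2:ℝ) = algebraMap ℚ ℝ 2 := by norm_num
  have hm : minpoly ℚ (2:ℝ) = X - C 2 := by
    rw [h2, minpoly.eq_X_sub_C]
  refine ⟨⟨one_lt_two, ?_, ?_⟩, ?_⟩
  · have : (2:ℝ) = algebraMap ℤ ℝ 2 := by norm_num
    rw [this]; exact isIntegral_algebraMap
  · intro z hz hne
    exfalso
    apply hne
    rw [hm] at hz
    simp only [map_sub, aeval_X, aeval_C] at hz
    have : z = 2 := by
      have := sub_eq_zero.mp hz
      simpa using this
    rw [this]; norm_num
  · rw [hm]; simp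

/-- Every real algebraic number field of degree `d` contains a Pisot number of
algebraic degree `d`. -/
theorem exists_pisot_of_degree
    (d : ℕ) (K : IntermediateField ℚ ℝ)
    (hfin : FiniteDimensional ℚ K) (hd : Module.finrank ℚ K = d) :
    ∃ β : ℝ, β ∈ K ∧ IsPisot β ∧ (minpoly ℚ β).natDegree = d := by
  classical
  haveI := hfin
  haveI : NumberField K := ⟨⟩
  rcases eq_or_lt_of_le (show 1 ≤ d by
    rw [← hd]; exact Module.finrank_pos) with h1 | h2
  · -- d = 1
    refine ⟨2, ?_, pisot_two.1, by rw [pisot_two.2, ← h1]⟩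
    have : (2:ℝ) = algebraMap ℚ ℝ 2 := by norm_num
    rw [this]
    exact K.algebraMap_mem 2
  · -- d ≥ 2
    set φ₀ : K →+* ℂ := Complex.ofRealHom.comp (algebraMap K ℝ) with hφ₀
    have hφ₀x : ∀ x : K, φ₀ x = ((x : ℝ) : ℂ) := fun x => rfl
    have hreal : ComplexEmbedding.IsReal φ₀ := by
      rw [ComplexEmbedding.isReal_iff]
      ext x
      simp [ComplexEmbedding.conjugate_coe_eq, hφ₀x]
    set wr : InfinitePlace K := InfinitePlace.mk φ₀ with hwr
    have hwrx : ∀ x : K, wr x = |(x : ℝ)| := by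
      intro x
      rw [hwr, InfinitePlace.apply, hφ₀x, Complex.norm_real, Real.norm_eq_abs]
    have hwrreal : wr.IsReal := ⟨φ₀, hreal, rfl⟩
    have hmult : wr.mult = 1 := by simp [InfinitePlace.mult, hwrreal]
    obtain ⟨u, hu⟩ := NumberField.Units.dirichletUnitTheorem.exists_unit (K := K) wr
    have hupos : ∀ w : InfinitePlace K, 0 < w (u : K) :=
      fun w => InfinitePlace.pos_iff.mpr (Units.coe_ne_zero u)
    have hult : ∀ w : InfinitePlace K, w ≠ wr → w (u : K) < 1 :=
      fun w hw => (Real.log_neg_iff (hupos w)).mp (hu w hw)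
    -- there is another place
    have hex : ∃ w : InfinitePlace K, w ≠ wr := by
      by_contra h
      push_neg at h
      have hsum := InfinitePlace.sum_mult_eq (K := K)
      have huniv : (Finset.univ : Finset (InfinitePlace K)) = {wr} := by
        apply Finset.eq_singleton_iff_unique_mem.mpr
        exact ⟨Finset.mem_univ _, fun w _ => h w⟩
      rw [huniv, Finset.sum_singleton, hmult, hd] at hsum
      omega
    -- product formula gives 1 < wr u
    have hwu : 1 < wr (u : K) := by
      have hprod := InfinitePlace.prod_eq_abs_norm (u : K)
      rw [Units.norm, Rat.cast_one] at hprod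
      rw [← Finset.prod_erase_mul _ _ (Finset.mem_univ wr), hmult, pow_one] at hprod
      obtain ⟨w1, hw1⟩ := hex
      have hne : (Finset.univ.erase wr).Nonempty :=
        ⟨w1, Finset.mem_erase.mpr ⟨hw1, Finset.mem_univ _⟩⟩
      have hP : ∏ w ∈ Finset.univ.erase wr, w (u : K) ^ w.mult < 1 := by
        have h := Finset.prod_lt_prod_of_nonempty
          (f := fun w : InfinitePlace K => w (u : K) ^ w.mult) (g := fun _ => (1:ℝ))
          (fun w _ => pow_pos (hupos w) _)
          (fun w hw => pow_lt_one₀ (le_of_lt (hupos w))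
            (hult w (Finset.ne_of_mem_erase hw)) InfinitePlace.mult_pos.ne')
          hne
        simpa using h
      have hPpos : 0 < ∏ w ∈ Finset.univ.erase wr, w (u : K) ^ w.mult :=
        Finset.prod_pos (fun w _ => pow_pos (hupos w) _)
      nlinarith [hupos wr]
    -- the Pisot number
    set b : K := ((u : 𝓞 K) : K)^2 with hb
    have hwb : ∀ w : InfinitePlace K, w ≠ wr → w b < 1 := by
      intro w hw
      rw [hb, map_pow]
      exact pow_lt_one₀ (hupos w).le (hult w hw) two_ne_zero
    have hwrb : 1 < wr b := by
      rw [hb, map_pow]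
      exact one_lt_pow₀ hwu two_ne_zero
    set β : ℝ := (b : ℝ) with hβ
    have hφ₀b : φ₀ b = (β : ℂ) := rfl
    have hβb : β = algebraMap K ℝ b := rfl
    have hβpos : 1 < β := by
      have h1 : 1 < |β| := by rw [← hwrx]; exact hwrb
      have hβnn : 0 ≤ β := by
        have : β = ((((u : 𝓞 K) : K)) : ℝ)^2 := by rw [hβ, hb]; push_cast; ring
        rw [this]; positivity
      rwa [abs_of_nonneg hβnn] at h1
    have hint : IsIntegral ℤ β := by
      have h1 : IsIntegral ℤ b := by
        have := RingOfIntegers.isIntegral_coe ((u : 𝓞 K)^2)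
        simpa [hb] using this
      have := h1.map (algebraMap K ℝ).toIntAlgHom
      simpa using this
    have hbint : IsIntegral ℚ b := IsIntegral.of_finite ℚ b
    have hmin : minpoly ℚ β = minpoly ℚ b := by
      rw [hβb]
      exact minpoly.algebraMap_eq (algebraMap K ℝ).injective b
    -- any complex embedding whose place is wr is φ₀
    have hmkeq : ∀ φ : K →+* ℂ, InfinitePlace.mk φ = wr → φ = φ₀ := by
      intro φ h
      rw [hwr, InfinitePlace.mk_eq_iff] at h
      rcases h with h | h
      · exact h
      · ext x
        have hx := RingHom.congr_fun h x
        rw [ComplexEmbedding.conjugate_coe_eq] at hx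
        have h3 : φ x = (starRingEnd ℂ) (φ₀ x) := by
          rw [← hx, Complex.conj_conj]
        rw [h3, hφ₀x, Complex.conj_ofReal]
    set L : IntermediateField ℚ K := IntermediateField.adjoin ℚ {b} with hL
    haveI : FiniteDimensional ↥L ↥K := FiniteDimensional.right ℚ ↥L ↥K
    have hLK : Module.finrank ↥L ↥K = 1 := by
      by_contra hne1
      have h2' : 2 ≤ Module.finrank ↥L ↥K := by
        have : 0 < Module.finrank ↥L ↥K := Module.finrank_pos
        omega
      have hcard : Fintype.card (↥K →ₐ[↥L] ℂ) = Module.finrank ↥L ↥K := AlgHom.card ↥L ↥K ℂ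
      set ι : ↥K →ₐ[↥L] ℂ := IsScalarTower.toAlgHom ↥L ↥K ℂ with hι
      obtain ⟨ψ, hψ⟩ := Fintype.exists_ne_of_one_lt_card (by rw [hcard]; omega) ι
      set φ := ψ.toRingHom with hφ
      have hbL : b ∈ L := IntermediateField.mem_adjoin_simple_self ℚ b
      have hφb : φ b = φ₀ b := by
        have h1 : φ b = ψ (algebraMap ↥L ↥K ⟨b, hbL⟩) := rfl
        rw [h1, AlgHom.commutes]
        rfl
      have hφne : φ ≠ φ₀ := by
        intro h
        refine hψ (AlgHom.ext fun x => ?_)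
        exact (RingHom.congr_fun h x).trans rfl
      have hmkne : InfinitePlace.mk φ ≠ wr := fun h => hφne (hmkeq φ h)
      have hlt := hwb _ hmkne
      rw [InfinitePlace.apply, hφb, ← InfinitePlace.apply (K := K) φ₀ b, ← hwr] at hlt
      exact lt_asymm hwrb hlt
    refine ⟨β, b.2, ⟨hβpos, hint, ?_⟩, ?_⟩
    · -- conjugates
      intro z hz hne
      rw [hmin] at hz
      obtain ⟨φA, hφAb⟩ := IntermediateField.exists_algHom_of_splits_of_aeval
        (F := ℚ) (E := ↥K) (K := ℂ)
        (fun s => ⟨IsIntegral.of_finite ℚ s, IsAlgClosed.splits _⟩) hz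
      set φ := φA.toRingHom with hφ
      have hφb : φ b = z := hφAb
      by_cases hmk : InfinitePlace.mk φ = wr
      · exact absurd (by rw [← hφb, hmkeq φ hmk, hφ₀b]) hne
      · have hlt := hwb _ hmk
        rwa [InfinitePlace.apply, hφb] at hlt
    · -- degree
      have hfr : Module.finrank ℚ ↥L = d := by
        have hmul := Module.finrank_mul_finrank ℚ ↥L ↥K
        rw [hLK, mul_one] at hmul
        rw [hmul, hd]
      rw [hmin]
      exact (IntermediateField.adjoin.finrank hbint).symm.trans hfr
end
end

section
/- Let δ be a Pisot number and let E be a finite set of positive integer powers of δ. Then for every r ∈ ℚ(δ) ∩ [0,1], both the greedy reachable set O_E(r) and the quasi-greedy reachable set O*_E(r) are finite (i.e., the transducers T_{E,r} and T*_{E,r} are finite). -/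
noncomputable section

open IntermediateField Polynomial in
/-- Clearing denominators of a rational number. -/
private lemma rat_clear_den (c : ℚ) (q : ℕ) (h : c.den ∣ q) :
    ∃ z : ℤ, (z : ℚ) = (q : ℚ) * c := by
  obtain ⟨m, rfl⟩ := h
  refine ⟨m * c.num, ?_⟩
  have hden : (c.den : ℚ) ≠ 0 := by exact_mod_cast c.den_nz
  have h1 : c * (c.den : ℚ) = (c.num : ℚ) :=
    ((div_eq_iff hden).mp (Rat.num_div_den c)).symm
  push_cast
  linear_combination (-(m : ℚ)) * h1

open IntermediateField Polynomial in
set_option maxHeartbeats 1000000 in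
/-- If `E` is a finite set of positive integer powers of a Pisot number `δ`, then for
every `r ∈ ℚ(δ) ∩ [0,1]` both reachable sets `O_E(r)` and `O*_E(r)` are finite, i.e. the
transducers `T_{E,r}` and `T*_{E,r}` are finite. -/
theorem pisot_powers_transducers_finite
    (δ : ℝ) (hδ : IsPisot δ)
    (E : Finset ℝ) (hE : ∀ x ∈ E, ∃ k : ℕ, 1 ≤ k ∧ x = δ ^ k)
    (r : ℝ) (hrQδ : ∃ P : Polynomial ℚ, Polynomial.aeval δ P = r)
    (hr0 : 0 ≤ r) (hr1 : r ≤ 1) :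
    (greedyReach (E : Set ℝ) r).Finite ∧ (quasiGreedyReach (E : Set ℝ) r).Finite := by
  classical
  obtain ⟨hδ1, hδint, hδconj⟩ := hδ
  obtain ⟨P, hP⟩ := hrQδ
  have hδ0 : (0:ℝ) < δ := lt_trans one_pos hδ1
  have hδQ : IsIntegral ℚ δ := hδint.tower_top
  haveI : FiniteDimensional ℚ ℚ⟮δ⟯ := IntermediateField.adjoin.finiteDimensional hδQ
  haveI : NumberField ℚ⟮δ⟯ := ⟨⟩
  set δK : ℚ⟮δ⟯ := IntermediateField.AdjoinSimple.gen ℚ δ with hδKdef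
  have hmapδ : algebraMap ℚ⟮δ⟯ ℝ δK = δ := IntermediateField.AdjoinSimple.algebraMap_gen ℚ δ
  set ι : ℚ⟮δ⟯ →+* ℂ := Complex.ofRealHom.comp (algebraMap ℚ⟮δ⟯ ℝ) with hι
  -- all non-identity embeddings send δK to a conjugate of modulus < 1
  have hconj : ∀ φ : ℚ⟮δ⟯ →+* ℂ, φ ≠ ι → ‖φ δK‖ < 1 := by
    intro φ hφ
    have hmin : minpoly ℚ δ = minpoly ℚ δK :=
      (IntermediateField.minpoly_gen ℚ δ).symm
    have hroot : Polynomial.aeval (φ δK) (minpoly ℚ δ) = 0 := by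
      rw [hmin]
      have h := Polynomial.aeval_algHom_apply φ.toRatAlgHom δK (minpoly ℚ δK)
      rw [minpoly.aeval, map_zero] at h
      exact h
    have hne : φ δK ≠ (δ : ℂ) := by
      intro heq
      apply hφ
      have hext : φ.toRatAlgHom = ι.toRatAlgHom := by
        apply IntermediateField.adjoin_algHom_ext ℚ
        intro x hx
        have hx' : x = δ := by simpa using hx
        subst hx'
        have hel : (⟨x, IntermediateField.subset_adjoin ℚ {x} (Set.mem_singleton x)⟩ :
            ℚ⟮x⟯) = δK := rfl
        rw [hel]
        show φ δK = ι δK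
        rw [heq, hι]
        rfl
      apply (RingHom.equivRatAlgHom _ _).injective
      rw [RingHom.equivRatAlgHom_apply, RingHom.equivRatAlgHom_apply]
      exact hext
    have := hδconj (φ δK) hroot hne
    exact this
  -- r as an element of the number field
  set rK : ℚ⟮δ⟯ := Polynomial.aeval δK P with hrKdef
  have hrmap : algebraMap ℚ⟮δ⟯ ℝ rK = r := by
    rw [hrKdef, ← hP]
    have h := Polynomial.aeval_algHom_apply (IsScalarTower.toAlgHom ℚ ℚ⟮δ⟯ ℝ) δK P
    rw [show (IsScalarTower.toAlgHom ℚ ℚ⟮δ⟯ ℝ) δK = δ from hmapδ] at h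
    exact h.symm
  -- the denominator
  set q : ℕ := P.support.prod (fun i => (P.coeff i).den) with hqdef
  have hq1 : 1 ≤ q := Finset.one_le_prod' (fun i _ => (P.coeff i).pos)
  have hq0 : (0:ℝ) < q := by exact_mod_cast Nat.lt_of_lt_of_le Nat.zero_lt_one hq1
  have hqK : ∀ i : ℕ, (P.coeff i).den ∣ q := by
    intro i
    by_cases hmem : i ∈ P.support
    · exact Finset.dvd_prod_of_mem _ hmem
    · rw [Polynomial.notMem_support_iff.mp hmem]
      simp
  have hqr : (q : ℚ⟮δ⟯) * rK ∈ Algebra.adjoin ℤ ({δK} : Set ℚ⟮δ⟯) := by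
    rw [hrKdef, Polynomial.aeval_eq_sum_range, Finset.mul_sum]
    apply Subalgebra.sum_mem
    intro i _
    obtain ⟨z, hz⟩ := rat_clear_den (P.coeff i) q (hqK i)
    have heq : (q : ℚ⟮δ⟯) * (P.coeff i • δK ^ i) = (z : ℚ⟮δ⟯) * δK ^ i := by
      rw [Algebra.smul_def]
      calc (q : ℚ⟮δ⟯) * (algebraMap ℚ ℚ⟮δ⟯ (P.coeff i) * δK ^ i)
          = algebraMap ℚ ℚ⟮δ⟯ ((q : ℚ) * P.coeff i) * δK ^ i := by
            rw [map_mul, map_natCast]; ring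
        _ = (z : ℚ⟮δ⟯) * δK ^ i := by rw [← hz, map_intCast]
    rw [heq]
    exact Subalgebra.mul_mem _ (Subalgebra.intCast_mem _ _)
      (Subalgebra.pow_mem _ (Algebra.self_mem_adjoin_singleton ℤ δK) i)
  -- uniform bound on the elements of E
  obtain ⟨M₀, hM₀⟩ := E.exists_le
  set M : ℝ := max M₀ 1 with hMdef
  have hM1 : (1:ℝ) ≤ M := le_max_right _ _
  have hME : ∀ β ∈ E, β ≤ M := fun β hβ => le_trans (hM₀ β hβ) (le_max_left _ _)
  -- the per-embedding bound and the invariant set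
  set Bf : (ℚ⟮δ⟯ →+* ℂ) → ℝ :=
    fun φ => max ‖φ ((q : ℚ⟮δ⟯) * rK)‖ ((q * M) / (1 - ‖φ δK‖)) with hBfdef
  have hBf0 : ∀ φ, 0 ≤ Bf φ := fun φ => le_trans (norm_nonneg _) (le_max_left _ _)
  set S : Set ℝ := {x | 0 ≤ x ∧ x ≤ 1 ∧ ∃ y : ℚ⟮δ⟯,
      y ∈ Algebra.adjoin ℤ ({δK} : Set ℚ⟮δ⟯) ∧ algebraMap ℚ⟮δ⟯ ℝ y = q * x ∧
      ∀ φ : ℚ⟮δ⟯ →+* ℂ, φ ≠ ι → ‖φ y‖ ≤ Bf φ} with hSdef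
  -- the key step: applying one transformation stays inside S
  have hstep : ∀ x, x ∈ S → ∀ k : ℕ, 1 ≤ k → ∀ n : ℤ, |(n:ℝ)| ≤ M →
      0 ≤ δ ^ k * x - n → δ ^ k * x - n ≤ 1 → (δ ^ k * x - n) ∈ S := by
    rintro x ⟨hx0, hx1, y, hyR, hyx, hyb⟩ k hk n hn h0 h1
    refine ⟨h0, h1, δK ^ k * y - ((n * q : ℤ) : ℚ⟮δ⟯), ?_, ?_, ?_⟩
    · exact Subalgebra.sub_mem _
        (Subalgebra.mul_mem _
          (Subalgebra.pow_mem _ (Algebra.self_mem_adjoin_singleton ℤ δK) k) hyR)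
        (Subalgebra.intCast_mem _ _)
    · rw [map_sub, map_mul, map_pow, hmapδ, hyx, map_intCast]
      push_cast
      ring
    · intro φ hφ
      have hc1 : ‖φ δK‖ < 1 := hconj φ hφ
      have hc0 : 0 ≤ ‖φ δK‖ := norm_nonneg _
      have hck : ‖φ δK‖ ^ k ≤ ‖φ δK‖ :=
        pow_le_of_le_one hc0 hc1.le (by omega)
      have hBφ : ‖φ y‖ ≤ Bf φ := hyb φ hφ
      have h2 : q * M / (1 - ‖φ δK‖) ≤ Bf φ := le_max_right _ _
      have h3 : q * M ≤ Bf φ * (1 - ‖φ δK‖) :=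
        (div_le_iff₀ (by linarith)).mp h2
      have hnq : ‖(((n * q : ℤ)) : ℂ)‖ ≤ M * q := by
        rw [Complex.norm_intCast]
        push_cast
        rw [abs_mul, Nat.abs_cast]
        exact mul_le_mul_of_nonneg_right hn (by positivity)
      have hcalc : ‖φ (δK ^ k * y - ((n * q : ℤ) : ℚ⟮δ⟯))‖ ≤
          ‖φ δK‖ ^ k * ‖φ y‖ + M * q := by
        rw [map_sub, map_mul, map_pow, map_intCast]
        calc ‖φ δK ^ k * φ y - ((n * q : ℤ) : ℂ)‖
            ≤ ‖φ δK ^ k * φ y‖ + ‖((n * q : ℤ) : ℂ)‖ := norm_sub_le _ _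
          _ ≤ ‖φ δK‖ ^ k * ‖φ y‖ + M * q := by
              rw [norm_mul, norm_pow]
              exact add_le_add le_rfl hnq
      have hmul : ‖φ δK‖ ^ k * ‖φ y‖ ≤ ‖φ δK‖ * Bf φ :=
        mul_le_mul hck hBφ (norm_nonneg _) hc0
      nlinarith [hcalc, hmul, h3]
  have hrS : r ∈ S :=
    ⟨hr0, hr1, (q : ℚ⟮δ⟯) * rK, hqr, by rw [map_mul, map_natCast, hrmap],
      fun φ _ => le_max_left _ _⟩
  have h0S : (0:ℝ) ∈ S := by
    refine ⟨le_refl 0, zero_le_one, 0, Subalgebra.zero_mem _, by simp, fun φ _ => ?_⟩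
    simpa using hBf0 φ
  -- closure of S under the greedy maps
  have hTmapS : ∀ β ∈ E, ∀ x ∈ S, Tmap β x ∈ S := by
    intro β hβ x hx
    obtain ⟨k, hk, rfl⟩ := hE β hβ
    unfold Tmap
    have hx0 : 0 ≤ x := hx.1
    have hx1 : x ≤ 1 := hx.2.1
    have hb0 : (0:ℝ) < δ ^ k := pow_pos hδ0 k
    have hbx0 : 0 ≤ δ ^ k * x := mul_nonneg hb0.le hx0
    have hbxM : δ ^ k * x ≤ M := by
      have h' : δ ^ k * x ≤ δ ^ k := by nlinarith
      exact le_trans h' (hME _ hβ)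
    have hn0 : (0:ℝ) ≤ ((⌊δ ^ k * x⌋ : ℤ) : ℝ) := by
      exact_mod_cast Int.floor_nonneg.mpr hbx0
    have hnle : ((⌊δ ^ k * x⌋ : ℤ) : ℝ) ≤ M := le_trans (Int.floor_le _) hbxM
    have habs : |((⌊δ ^ k * x⌋ : ℤ) : ℝ)| ≤ M := by
      rw [abs_of_nonneg hn0]; exact hnle
    have h0' : 0 ≤ δ ^ k * x - ⌊δ ^ k * x⌋ := by
      have := Int.floor_le (δ ^ k * x); linarith
    have h1' : δ ^ k * x - ⌊δ ^ k * x⌋ ≤ 1 := by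
      have := Int.lt_floor_add_one (δ ^ k * x); linarith
    exact hstep x hx k hk _ habs h0' h1'
  -- closure of S under the quasi-greedy maps
  have hTstarS : ∀ β ∈ E, ∀ x ∈ S, Tstar β x ∈ S := by
    intro β hβ x hx
    by_cases hx0' : x = 0
    · rw [hx0', Tstar, if_pos rfl]
      exact h0S
    obtain ⟨k, hk, rfl⟩ := hE β hβ
    rw [Tstar, if_neg hx0']
    have hx0 : 0 ≤ x := hx.1
    have hx1 : x ≤ 1 := hx.2.1
    have hb0 : (0:ℝ) < δ ^ k := pow_pos hδ0 k
    have ha0 : 0 ≤ δ ^ k * x := mul_nonneg hb0.le hx0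
    have haM : δ ^ k * x ≤ M := by
      have h' : δ ^ k * x ≤ δ ^ k := by nlinarith
      exact le_trans h' (hME _ hβ)
    have hnlt : ((⌈δ ^ k * x - 1⌉ : ℤ) : ℝ) < δ ^ k * x := by
      have := Int.ceil_lt_add_one (δ ^ k * x - 1); linarith
    have hnge : δ ^ k * x - 1 ≤ ((⌈δ ^ k * x - 1⌉ : ℤ) : ℝ) := Int.le_ceil _
    have habs : |((⌈δ ^ k * x - 1⌉ : ℤ) : ℝ)| ≤ M :=
      abs_le.mpr ⟨by linarith, by linarith⟩
    exact hstep x hx k hk _ habs (by linarith) (by linarith)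
  -- both kinds of orbits stay in S
  have hTlist : ∀ l : List ℝ, (∀ β ∈ l, β ∈ (E : Set ℝ)) → ∀ x ∈ S, TList l x ∈ S := by
    intro l
    induction l with
    | nil => intro _ x hx; simpa [TList] using hx
    | cons β t ih =>
      intro hl x hx
      have hcons : TList (β :: t) x = TList t (Tmap β x) := rfl
      rw [hcons]
      exact ih (fun γ hγ => hl γ (List.mem_cons_of_mem β hγ)) _
        (hTmapS β (hl β (List.mem_cons_self (a := β) (l := t))) x hx)
  have hTstarlist : ∀ l : List ℝ, (∀ β ∈ l, β ∈ (E : Set ℝ)) → ∀ x ∈ S,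
      TstarList l x ∈ S := by
    intro l
    induction l with
    | nil => intro _ x hx; simpa [TstarList] using hx
    | cons β t ih =>
      intro hl x hx
      have hcons : TstarList (β :: t) x = TstarList t (Tstar β x) := rfl
      rw [hcons]
      exact ih (fun γ hγ => hl γ (List.mem_cons_of_mem β hγ)) _
        (hTstarS β (hl β (List.mem_cons_self (a := β) (l := t))) x hx)
  -- S is finite
  have hδKint : IsIntegral ℤ δK := by
    have := hδint
    rw [← hmapδ] at this
    exact (isIntegral_algebraMap_iff (algebraMap ℚ⟮δ⟯ ℝ).injective).mp this
  have hRle : Algebra.adjoin ℤ ({δK} : Set ℚ⟮δ⟯) ≤ integralClosure ℤ ℚ⟮δ⟯ :=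
    Algebra.adjoin_le (by
      rintro y hy
      rw [Set.mem_singleton_iff] at hy
      subst hy
      exact hδKint)
  set B : ℝ := max (q:ℝ) (Finset.univ.sup' Finset.univ_nonempty Bf) with hBdef
  have hfin : {y : ℚ⟮δ⟯ | IsIntegral ℤ y ∧ ∀ φ : ℚ⟮δ⟯ →+* ℂ, ‖φ y‖ ≤ B}.Finite :=
    NumberField.Embeddings.finite_of_norm_le ℚ⟮δ⟯ ℂ B
  have hSsub : S ⊆ (fun y : ℚ⟮δ⟯ => algebraMap ℚ⟮δ⟯ ℝ y / q) ''
      {y : ℚ⟮δ⟯ | IsIntegral ℤ y ∧ ∀ φ : ℚ⟮δ⟯ →+* ℂ, ‖φ y‖ ≤ B} := by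
    rintro x ⟨hx0, hx1, y, hyR, hyx, hyb⟩
    refine ⟨y, ⟨hRle hyR, ?_⟩, ?_⟩
    · intro φ
      by_cases hφ : φ = ι
      · subst hφ
        have hval : ‖ι y‖ = |algebraMap ℚ⟮δ⟯ ℝ y| := by
          rw [hι]
          simp [Complex.norm_real, Real.norm_eq_abs]
        rw [hval, hyx, abs_of_nonneg (by positivity)]
        calc (q:ℝ) * x ≤ q * 1 := mul_le_mul_of_nonneg_left hx1 hq0.le
          _ = q := mul_one _
          _ ≤ B := le_max_left _ _
      · exact le_trans (hyb φ hφ)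
          (le_trans (Finset.le_sup' Bf (Finset.mem_univ φ)) (le_max_right _ _))
    · show algebraMap ℚ⟮δ⟯ ℝ y / q = x
      rw [hyx, mul_div_cancel_left₀ x (ne_of_gt hq0)]
  constructor
  · apply Set.Finite.subset (hfin.image (fun y : ℚ⟮δ⟯ => algebraMap ℚ⟮δ⟯ ℝ y / q))
    rintro x ⟨l, hl, rfl⟩
    exact hSsub (hTlist l hl r hrS)
  · apply Set.Finite.subset (hfin.image (fun y : ℚ⟮δ⟯ => algebraMap ℚ⟮δ⟯ ℝ y / q))
    rintro x ⟨l, hl, rfl⟩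
    exact hSsub (hTstarlist l hl r hrS)
end
end

section
/- Let δ be an algebraic integer of degree d, let E be a finite set of Pisot numbers of degree d belonging to ℤ[δ], and let b ≥ 2 be an integer. If a Cantor real base B ∈ E^ℕ is a b-automatic sequence (over the finite alphabet E), then for every r ∈ ℚ(δ) ∩ [0,1], the digit sequences d_B(r) and d*_B(r) are b-automatic sequences. -/
noncomputable section

/-- A sequence is `b`-automatic if its `b`-kernel is finite. -/
def IsBAutomatic {X : Type*} (b : ℕ) (a : ℕ → X) : Prop :=
  {s : ℕ → X | ∃ k j : ℕ, j < b ^ k ∧ s = fun n => a (b ^ k * n + j)}.Finite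

lemma IsBAutomatic.comp {X Y : Type*} {b : ℕ} {a : ℕ → X} (h : IsBAutomatic b a) (f : X → Y) :
    IsBAutomatic b (fun n => f (a n)) := by
  apply Set.Finite.subset (h.image (fun s => fun n => f (s n)))
  rintro s ⟨k, j, hj, rfl⟩
  exact ⟨fun n => a (b ^ k * n + j), ⟨k, j, hj, rfl⟩, rfl⟩

lemma IsBAutomatic.pair {X Y : Type*} {b : ℕ} {a : ℕ → X} {a' : ℕ → Y}
    (h : IsBAutomatic b a) (h' : IsBAutomatic b a') :
    IsBAutomatic b (fun n => (a n, a' n)) := by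
  apply Set.Finite.subset ((h.prod h').image (fun p => fun n => (p.1 n, p.2 n)))
  rintro s ⟨k, j, hj, rfl⟩
  exact ⟨(fun n => a (b ^ k * n + j), fun n => a' (b ^ k * n + j)),
    ⟨⟨k, j, hj, rfl⟩, ⟨k, j, hj, rfl⟩⟩, rfl⟩

/-- prefix product: `pp u n = u (n-1) * ⋯ * u 0`. -/
def pp {M : Type*} [Monoid M] (u : ℕ → M) : ℕ → M
  | 0 => 1
  | n + 1 => u n * pp u n

lemma pp_add {M : Type*} [Monoid M] (u : ℕ → M) (m j : ℕ) :
    pp u (m + j) = ((List.range j).reverse.map (fun t => u (m + t))).prod * pp u m := by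
  induction j with
  | zero => simp
  | succ j ih =>
    rw [show m + (j+1) = (m+j) + 1 from rfl, pp, ih, List.range_succ]
    simp [mul_assoc]

lemma IsBAutomatic.prefixProd {M : Type*} [Monoid M] [Finite M] {b : ℕ} {u : ℕ → M}
    (hu : IsBAutomatic b u) : IsBAutomatic b (pp u) := by
  classical
  set K₀ : Set (ℕ → M) := {s : ℕ → M | ∃ k j : ℕ, j < b ^ k ∧ s = fun n => u (b ^ k * n + j)}
    with hK₀def
  have hK₀ : K₀.Finite := hu
  haveI : Finite ↥K₀ := hK₀.to_subtype
  -- F : finite set of sequences expressible pointwise from the kernel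
  set F : Set (ℕ → M) := Set.range (fun q : (↥K₀ → M) → M => fun n => q (fun s => s.1 n))
    with hFdef
  have hF : F.Finite := Set.finite_range _
  -- block products belong to F
  have hLF : ∀ k j : ℕ, j ≤ b ^ k →
      (fun n => ((List.range j).reverse.map (fun t => u (b ^ k * n + t))).prod) ∈ F := by
    intro k j hj
    refine ⟨fun v => ((List.range j).reverse.map
      (fun t => if h : (fun m => u (b ^ k * m + t)) ∈ K₀ then v ⟨_, h⟩ else 1)).prod, ?_⟩
    funext n
    simp only
    congr 1
    apply List.map_congr_left
    intro t ht
    have htj : t < j := by simpa using ht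
    rw [dif_pos ⟨k, t, lt_of_lt_of_le htj hj, rfl⟩]
  -- pp u (b^k * n) is a prefix product of an element of F
  have hG : ∀ k : ℕ, ∀ n, pp u (b ^ k * n)
      = pp (fun m => ((List.range (b ^ k)).reverse.map (fun t => u (b ^ k * m + t))).prod) n := by
    intro k n
    induction n with
    | zero => simp [pp]
    | succ n ih =>
      rw [show b ^ k * (n+1) = b ^ k * n + b ^ k by ring, pp_add, ih]
      rfl
  -- conclude
  apply Set.Finite.subset ((hF.prod (hF.image pp)).image (fun p => fun n => p.1 n * p.2 n))
  rintro s ⟨k, j, hj, rfl⟩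
  refine ⟨(fun n => ((List.range j).reverse.map (fun t => u (b ^ k * n + t))).prod,
    pp (fun m => ((List.range (b ^ k)).reverse.map (fun t => u (b ^ k * m + t))).prod)), 
    ⟨hLF k j hj.le, ⟨_, hLF k (b ^ k) le_rfl, rfl⟩⟩, ?_⟩
  funext n
  simp only
  rw [← hG, ← pp_add]

/-- the run of an automaton with transitions `f` over input `u` starting at `s0` -/
def runSt {Q S : Type*} (f : Q → S → S) (u : ℕ → Q) (s0 : S) : ℕ → S
  | 0 => s0
  | n + 1 => f (u n) (runSt f u s0 n)

lemma IsBAutomatic.run {Q S : Type*} [Finite S] {b : ℕ} {u : ℕ → Q}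
    (hu : IsBAutomatic b u) (f : Q → S → S) (s0 : S) :
    IsBAutomatic b (runSt f u s0) := by
  let v : ℕ → Function.End S := fun n => f (u n)
  have hv : IsBAutomatic b v := hu.comp _
  have key : ∀ n, runSt f u s0 n = pp v n s0 := by
    intro n
    induction n with
    | zero => rfl
    | succ n ih => exact congrArg (f (u n)) ih
  haveI : Finite (Function.End S) := Pi.finite
  have h := (hv.prefixProd).comp (fun g : Function.End S => g s0)
  convert h using 1
  funext n
  exact key n

open scoped IntermediateField

lemma orbit_finite
    (δ : ℝ) (hδint : IsIntegral ℤ δ)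
    (E : Finset ℝ)
    (hEpisot : ∀ β ∈ E, IsPisot β)
    (hEdeg : ∀ β ∈ E, (minpoly ℚ β).natDegree = (minpoly ℚ δ).natDegree)
    (hEZδ : ∀ β ∈ E, ∃ P : Polynomial ℤ, Polynomial.aeval δ P = β)
    (B : ℕ → ℝ) (hBE : ∀ n, B n ∈ E)
    (r : ℝ) (hrQδ : ∃ P : Polynomial ℚ, Polynomial.aeval δ P = r)
    (x : ℕ → ℝ) (hx0 : x 0 = r)
    (hstep : ∀ n, ∃ c : ℤ, x (n + 1) = B n * x n - c)
    (hxlo : ∀ n, 0 ≤ x n) (hxhi : ∀ n, x n ≤ 1) :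
    (Set.range x).Finite := by
  classical
  have hδQ : IsIntegral ℚ δ := hδint.tower_top
  set K : IntermediateField ℚ ℝ := ℚ⟮δ⟯ with hKdef
  haveI : FiniteDimensional ℚ K := IntermediateField.adjoin.finiteDimensional hδQ
  haveI : NumberField K := ⟨⟩
  have hinj : Function.Injective (algebraMap K ℝ) := (algebraMap K ℝ).injective
  have hδK : δ ∈ K := IntermediateField.mem_adjoin_simple_self ℚ δ
  -- membership lemmas
  have haevalQ : ∀ P : Polynomial ℚ, Polynomial.aeval δ P ∈ K := by
    intro P
    have h1 : Polynomial.aeval δ P ∈ Algebra.adjoin ℚ {δ} := by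
      rw [Algebra.adjoin_singleton_eq_range_aeval]; exact ⟨P, rfl⟩
    have h2 : Algebra.adjoin ℚ {δ} ≤ K.toSubalgebra :=
      Algebra.adjoin_le (by simpa using hδK)
    exact h2 h1
  have haevalZ : ∀ P : Polynomial ℤ, Polynomial.aeval δ P ∈ K := by
    intro P
    rw [← Polynomial.aeval_map_algebraMap ℚ]
    exact haevalQ _
  have hEK : ∀ β ∈ E, β ∈ K := by
    intro β hβ; obtain ⟨P, hP⟩ := hEZδ β hβ; exact hP ▸ haevalZ P
  have hrK : r ∈ K := by obtain ⟨P, hP⟩ := hrQδ; exact hP ▸ haevalQ P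
  have hxK : ∀ n, x n ∈ K := by
    intro n
    induction n with
    | zero => rw [hx0]; exact hrK
    | succ n ih =>
      obtain ⟨c, hc⟩ := hstep n
      rw [hc]
      exact sub_mem (mul_mem (hEK _ (hBE n)) ih) (IntermediateField.intCast_mem K c)
  set xK : ℕ → K := fun n => ⟨x n, hxK n⟩ with hxKdef
  -- denominator
  obtain ⟨P, hP⟩ := hrQδ
  obtain ⟨b0, hb0⟩ := IsLocalization.integerNormalization_map_to_map (nonZeroDivisors ℤ) P
  have hb0ne : (b0 : ℤ) ≠ 0 := nonZeroDivisors.coe_ne_zero b0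
  have hb0r : IsIntegral ℤ (((b0 : ℤ) : ℝ) * r) := by
    have h1 : ((b0 : ℤ) : ℝ) * r
        = Polynomial.aeval δ (IsLocalization.integerNormalization (nonZeroDivisors ℤ) P) := by
      rw [← Polynomial.aeval_map_algebraMap ℚ δ
        (IsLocalization.integerNormalization (nonZeroDivisors ℤ) P), hb0]
      rw [map_zsmul, hP, zsmul_eq_mul]
    rw [h1]
    have hmem : Polynomial.aeval δ (IsLocalization.integerNormalization (nonZeroDivisors ℤ) P)
        ∈ Algebra.adjoin ℤ {δ} := by
      rw [Algebra.adjoin_singleton_eq_range_aeval]; exact ⟨_, rfl⟩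
    have hle : Algebra.adjoin ℤ {δ} ≤ integralClosure ℤ ℝ :=
      Algebra.adjoin_le (by simpa [mem_integralClosure_iff] using hδint)
    exact hle hmem
  have hbx : ∀ n, IsIntegral ℤ (((b0 : ℤ) : ℝ) * x n) := by
    intro n
    induction n with
    | zero => rw [hx0]; exact hb0r
    | succ n ih =>
      obtain ⟨c, hc⟩ := hstep n
      have h1 : ((b0 : ℤ) : ℝ) * x (n + 1)
          = B n * (((b0 : ℤ) : ℝ) * x n) - (((b0 : ℤ) * c : ℤ) : ℝ) := by
        rw [hc]; push_cast; ring
      rw [h1]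
      refine IsIntegral.sub (IsIntegral.mul ((hEpisot _ (hBE n)).2.1) ih) ?_
      exact (isIntegral_algebraMap (R := ℤ) (A := ℝ) (x := (b0 : ℤ) * c))
  -- embeddings
  set τ : K →+* ℂ := Complex.ofRealHom.comp (algebraMap K ℝ) with hτdef
  have hτ : ∀ y : K, τ y = ((y : ℝ) : ℂ) := fun y => rfl
  have hconj : ∀ σ : K →+* ℂ, σ ≠ τ → ∀ β (hβ : β ∈ E),
      ‖σ ⟨β, hEK β hβ⟩‖ < 1 := by
    intro σ hσ β hβ
    set bk : K := ⟨β, hEK β hβ⟩ with hbkdef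
    have hβR : algebraMap K ℝ bk = β := rfl
    have hβQ : IsIntegral ℚ β := ((hEpisot β hβ).2.1).tower_top
    have hbkQ : IsIntegral ℚ bk := by
      rwa [← isIntegral_algebraMap_iff (A := K) (B := ℝ) hinj, hβR]
    have hmin : minpoly ℚ bk = minpoly ℚ β := by
      rw [← hβR, minpoly.algebraMap_eq hinj]
    have hroot : Polynomial.aeval (σ bk) (minpoly ℚ β) = 0 := by
      rw [← hmin, show σ bk = σ.toRatAlgHom bk from rfl,
        Polynomial.aeval_algHom_apply, minpoly.aeval, map_zero]
    have hne : σ bk ≠ (β : ℂ) := by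
      intro heq
      apply hσ
      have hgen : Algebra.adjoin ℚ {bk} = (⊤ : Subalgebra ℚ K) := by
        rw [← IntermediateField.adjoin_simple_toSubalgebra_of_isAlgebraic hbkQ.isAlgebraic]
        apply Algebra.toSubmodule_eq_top.1
        apply Submodule.eq_top_of_finrank_eq
        rw [ℚ⟮bk⟯.toSubalgebra.finrank_toSubmodule,
          IntermediateField.finrank_eq_finrank_subalgebra,
          IntermediateField.adjoin.finrank hbkQ, hmin, hEdeg β hβ,
          ← IntermediateField.adjoin.finrank hδQ]
      have heqz : AlgHom.equalizer σ.toRatAlgHom τ.toRatAlgHom = ⊤ := by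
        rw [eq_top_iff, ← hgen]
        apply Algebra.adjoin_le
        intro y hy
        rw [Set.mem_singleton_iff] at hy
        subst hy
        show σ bk = τ bk
        rw [heq, hτ bk]
      ext y
      have : y ∈ AlgHom.equalizer σ.toRatAlgHom τ.toRatAlgHom := heqz ▸ trivial
      exact this
    exact (hEpisot β hβ).2.2 (σ bk) hroot hne
  -- bounds on digits
  have hEne : E.Nonempty := ⟨B 0, hBE 0⟩
  have hAne : E.attach.Nonempty := Finset.attach_nonempty_iff.mpr hEne
  set C : ℝ := 1 + E.sup' hEne id with hCdef
  have hβleC : ∀ β ∈ E, β ≤ C - 1 := by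
    intro β hβ
    have h := Finset.le_sup' (id : ℝ → ℝ) hβ
    rw [id_eq] at h
    linarith
  have hcbd : ∀ n (c : ℤ), x (n + 1) = B n * x n - c → |(c : ℝ)| ≤ C := by
    intro n c hc
    have h1 : (1 : ℝ) < B n := (hEpisot _ (hBE n)).1
    have h2 : B n ≤ C - 1 := hβleC _ (hBE n)
    have h3 : B n * x n ≤ B n := mul_le_of_le_one_right (by linarith) (hxhi n)
    have h4 : 0 ≤ B n * x n := mul_nonneg (by linarith) (hxlo n)
    have h5 : (c : ℝ) = B n * x n - x (n + 1) := by rw [hc]; ring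
    have h6 := hxhi (n + 1)
    have h7 := hxlo (n + 1)
    rw [abs_le]
    constructor <;> [linarith; linarith]
  -- per-embedding data
  set ρ : (K →+* ℂ) → ℝ :=
    fun σ => E.attach.sup' hAne (fun p => ‖σ ⟨p.1, hEK p.1 p.2⟩‖) with hρdef
  have hρB : ∀ σ n, ‖σ ⟨B n, hEK _ (hBE n)⟩‖ ≤ ρ σ := fun σ n =>
    Finset.le_sup' (fun p : {y // y ∈ E} => ‖σ ⟨p.1, hEK p.1 p.2⟩‖)
      (Finset.mem_attach E ⟨B n, hBE n⟩)
  have hρ0 : ∀ σ, 0 ≤ ρ σ := fun σ => le_trans (norm_nonneg _) (hρB σ 0)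
  have hρlt : ∀ σ, σ ≠ τ → ρ σ < 1 := fun σ hσ =>
    (Finset.sup'_lt_iff hAne).mpr (fun p _ => hconj σ hσ p.1 p.2)
  set Mf : (K →+* ℂ) → ℝ :=
    fun σ => if σ = τ then 1 else max (‖σ (xK 0)‖) (C / (1 - ρ σ)) with hMfdef
  have hMσ : ∀ σ n, ‖σ (xK n)‖ ≤ Mf σ := by
    intro σ n
    by_cases hσ : σ = τ
    · have hMfτ : Mf σ = 1 := by rw [hMfdef]; simp [hσ]
      rw [hMfτ, hσ, hτ, Complex.norm_real, Real.norm_eq_abs]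
      have h1 := hxlo n
      have h2 := hxhi n
      rw [abs_le]
      exact ⟨by simpa using by linarith, by simpa using h2⟩
    · have hMfσ : Mf σ = max (‖σ (xK 0)‖) (C / (1 - ρ σ)) := by
        rw [hMfdef]; simp [hσ]
      have hρ1 : ρ σ < 1 := hρlt σ hσ
      have hCle : C ≤ (1 - ρ σ) * Mf σ := by
        have h1 : C / (1 - ρ σ) ≤ Mf σ := hMfσ ▸ le_max_right _ _
        have h2 : (0 : ℝ) < 1 - ρ σ := by linarith
        calc C = C / (1 - ρ σ) * (1 - ρ σ) := by field_simp
        _ ≤ Mf σ * (1 - ρ σ) := mul_le_mul_of_nonneg_right h1 (le_of_lt h2)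
        _ = (1 - ρ σ) * Mf σ := by ring
      induction n with
      | zero => exact hMfσ ▸ le_max_left _ _
      | succ n ih =>
        obtain ⟨c, hc⟩ := hstep n
        have hKid : xK (n + 1) = (⟨B n, hEK _ (hBE n)⟩ : K) * xK n - (c : K) := by
          apply Subtype.ext
          push_cast
          exact hc
        have h2 : σ (xK (n + 1)) = σ ⟨B n, hEK _ (hBE n)⟩ * σ (xK n) - ((c : ℤ) : ℂ) := by
          rw [hKid, map_sub, map_mul, map_intCast]
        have htri : ‖σ ⟨B n, hEK _ (hBE n)⟩ * σ (xK n) - ((c : ℤ) : ℂ)‖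
            ≤ ‖σ ⟨B n, hEK _ (hBE n)⟩ * σ (xK n)‖ + ‖((c : ℤ) : ℂ)‖ := by
          simpa [sub_eq_add_neg] using
            norm_add_le (σ ⟨B n, hEK _ (hBE n)⟩ * σ (xK n)) (-((c : ℤ) : ℂ))
        have h3 : ‖σ (xK (n + 1))‖ ≤ ρ σ * ‖σ (xK n)‖ + |(c : ℝ)| := by
          rw [h2]
          refine le_trans htri ?_
          rw [norm_mul, Complex.norm_intCast]
          exact add_le_add (mul_le_mul_of_nonneg_right (hρB σ n) (norm_nonneg _)) le_rfl
        have h4 : ρ σ * ‖σ (xK n)‖ ≤ ρ σ * Mf σ :=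
          mul_le_mul_of_nonneg_left ih (hρ0 σ)
        have h5 : |(c : ℝ)| ≤ C := hcbd n c hc
        have h6 : ρ σ * Mf σ + (1 - ρ σ) * Mf σ = Mf σ := by ring
        linarith
  -- global bound
  haveI : Fintype (K →+* ℂ) := inferInstance
  set M : ℝ := Finset.univ.sup' ⟨τ, Finset.mem_univ τ⟩ Mf with hMdef
  have hM : ∀ (σ : K →+* ℂ) n, ‖σ (xK n)‖ ≤ M := fun σ n =>
    le_trans (by exact hMσ σ n) (Finset.le_sup' Mf (Finset.mem_univ σ))
  -- conclude via finiteness of bounded algebraic integers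
  have hfin := NumberField.Embeddings.finite_of_norm_le K ℂ (|((b0 : ℤ) : ℝ)| * M)
  have hsub : Set.range xK ⊆ (fun y : K => (((b0 : ℤ) : K))⁻¹ * y) ''
      {y : K | IsIntegral ℤ y ∧ ∀ φ : K →+* ℂ, ‖φ y‖ ≤ |((b0 : ℤ) : ℝ)| * M} := by
    rintro _ ⟨n, rfl⟩
    have hb0K : ((b0 : ℤ) : K) ≠ 0 := Int.cast_ne_zero.mpr hb0ne
    refine ⟨((b0 : ℤ) : K) * xK n, ⟨?_, ?_⟩, ?_⟩
    · rw [← isIntegral_algebraMap_iff (A := K) (B := ℝ) hinj]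
      have hcast : algebraMap K ℝ (((b0 : ℤ) : K) * xK n) = ((b0 : ℤ) : ℝ) * x n := by
        push_cast
        rfl
      rw [hcast]
      exact hbx n
    · intro φ
      rw [map_mul, map_intCast, norm_mul]
      have hnc : ‖((b0 : ℤ) : ℂ)‖ = |((b0 : ℤ) : ℝ)| := by
        rw [Complex.norm_intCast]
      rw [hnc]
      exact mul_le_mul_of_nonneg_left (hM φ n) (abs_nonneg _)
    · field_simp
  have h1 : (Set.range xK).Finite := Set.Finite.subset (hfin.image _) hsub
  have h2 : Set.range x ⊆ (fun y : K => (y : ℝ)) '' Set.range xK := by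
    rintro _ ⟨n, rfl⟩
    exact ⟨xK n, ⟨n, rfl⟩, rfl⟩
  exact Set.Finite.subset (h1.image _) h2


/-- If `δ` is an algebraic integer of degree `d`, `E` a finite set of Pisot numbers of
degree `d` in `ℤ[δ]`, and `B ∈ E^ℕ` a Cantor real base that is `b`-automatic, then for
every `r ∈ ℚ(δ) ∩ [0,1]` the digit sequences `d_B(r)` and `d*_B(r)` are `b`-automatic. -/
theorem automatic_base_automatic_expansions
    (d : ℕ) (δ : ℝ) (hδint : IsIntegral ℤ δ) (hδdeg : (minpoly ℚ δ).natDegree = d)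
    (E : Finset ℝ)
    (hEpisot : ∀ β ∈ E, IsPisot β)
    (hEdeg : ∀ β ∈ E, (minpoly ℚ β).natDegree = d)
    (hEZδ : ∀ β ∈ E, ∃ P : Polynomial ℤ, Polynomial.aeval δ P = β)
    (b : ℕ) (hb : 2 ≤ b)
    (B : ℕ → ℝ) (hBE : ∀ n, B n ∈ E) (hBaut : IsBAutomatic b B)
    (r : ℝ) (hrQδ : ∃ P : Polynomial ℚ, Polynomial.aeval δ P = r)
    (hr0 : 0 ≤ r) (hr1 : r ≤ 1) :
    IsBAutomatic b (greedyDigit B r) ∧ IsBAutomatic b (quasiGreedyDigit B r) := by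
  classical
  have hEdeg' : ∀ β ∈ E, (minpoly ℚ β).natDegree = (minpoly ℚ δ).natDegree := by
    intro β hβ; rw [hEdeg β hβ, hδdeg]
  constructor
  · -- greedy
    set x : ℕ → ℝ := fun n => iterT B n r with hxdef
    have hxlo : ∀ n, 0 ≤ x n := by
      intro n
      cases n with
      | zero => exact hr0
      | succ n =>
        show 0 ≤ Tmap (B n) (iterT B n r)
        have : Tmap (B n) (iterT B n r) = Int.fract (B n * iterT B n r) := rfl
        rw [this]
        exact Int.fract_nonneg _
    have hxhi : ∀ n, x n ≤ 1 := by
      intro n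
      cases n with
      | zero => exact hr1
      | succ n =>
        show Tmap (B n) (iterT B n r) ≤ 1
        have : Tmap (B n) (iterT B n r) = Int.fract (B n * iterT B n r) := rfl
        rw [this]
        exact le_of_lt (Int.fract_lt_one _)
    have hstep : ∀ n, ∃ c : ℤ, x (n + 1) = B n * x n - c :=
      fun n => ⟨⌊B n * x n⌋, rfl⟩
    have hS : (Set.range x).Finite :=
      orbit_finite δ hδint E hEpisot hEdeg' hEZδ B hBE r hrQδ x rfl hstep hxlo hxhi
    haveI : Finite ↥(Set.range x) := hS.to_subtype
    set S : Set ℝ := Set.range x with hSdef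
    let f : ℝ → ↥S → ↥S := fun β s => if h : Tmap β s.1 ∈ S then ⟨_, h⟩ else s
    let s0 : ↥S := ⟨r, ⟨0, rfl⟩⟩
    have hrun : ∀ n, (runSt f B s0 n).1 = x n := by
      intro n
      induction n with
      | zero => rfl
      | succ n ih =>
        show (f (B n) (runSt f B s0 n)).1 = x (n + 1)
        have hmem : Tmap (B n) (runSt f B s0 n).1 ∈ S := by
          rw [ih]; exact ⟨n + 1, rfl⟩
        simp only [f, dif_pos hmem]
        rw [ih]
        rfl
    have haut := ((hBaut.pair (hBaut.run f s0)).comp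
      (fun p : ℝ × ↥S => ⌊p.1 * (p.2.1 : ℝ)⌋))
    convert haut using 1
    funext n
    show ⌊B n * x n⌋ = _
    simp only
    rw [hrun n]
  · -- quasi-greedy
    set x : ℕ → ℝ := fun n => iterTstar B n r with hxdef
    have hxlo : ∀ n, 0 ≤ x n := by
      intro n
      induction n with
      | zero => exact hr0
      | succ n ih =>
        show 0 ≤ Tstar (B n) (iterTstar B n r)
        rw [Tstar]
        split
        · exact le_rfl
        · rename_i h0
          have h1 : (1 : ℝ) < B n := (hEpisot _ (hBE n)).1
          have h2 : 0 < iterTstar B n r := lt_of_le_of_ne ih (Ne.symm h0)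
          have h3 : (⌈B n * iterTstar B n r - 1⌉ : ℝ) < B n * iterTstar B n r - 1 + 1 :=
            Int.ceil_lt_add_one _
          linarith
    have hxhi : ∀ n, x n ≤ 1 := by
      intro n
      cases n with
      | zero => exact hr1
      | succ n =>
        show Tstar (B n) (iterTstar B n r) ≤ 1
        rw [Tstar]
        split
        · exact zero_le_one
        · have h3 : B n * iterTstar B n r - 1 ≤ (⌈B n * iterTstar B n r - 1⌉ : ℝ) :=
            Int.le_ceil _
          linarith
    have hstep : ∀ n, ∃ c : ℤ, x (n + 1) = B n * x n - c := by
      intro n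
      by_cases h0 : x n = 0
      · refine ⟨0, ?_⟩
        show Tstar (B n) (iterTstar B n r) = B n * x n - (0 : ℤ)
        rw [Tstar, if_pos h0, h0]
        push_cast
        ring
      · refine ⟨⌈B n * x n - 1⌉, ?_⟩
        show Tstar (B n) (iterTstar B n r) = _
        rw [Tstar, if_neg h0]
    have hS : (Set.range x).Finite :=
      orbit_finite δ hδint E hEpisot hEdeg' hEZδ B hBE r hrQδ x rfl hstep hxlo hxhi
    haveI : Finite ↥(Set.range x) := hS.to_subtype
    set S : Set ℝ := Set.range x with hSdef
    let f : ℝ → ↥S → ↥S := fun β s => if h : Tstar β s.1 ∈ S then ⟨_, h⟩ else s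
    let s0 : ↥S := ⟨r, ⟨0, rfl⟩⟩
    have hrun : ∀ n, (runSt f B s0 n).1 = x n := by
      intro n
      induction n with
      | zero => rfl
      | succ n ih =>
        show (f (B n) (runSt f B s0 n)).1 = x (n + 1)
        have hmem : Tstar (B n) (runSt f B s0 n).1 ∈ S := by
          rw [ih]; exact ⟨n + 1, rfl⟩
        simp only [f, dif_pos hmem]
        rw [ih]
        rfl
    have haut := ((hBaut.pair (hBaut.run f s0)).comp
      (fun p : ℝ × ↥S => ⌈p.1 * (p.2.1 : ℝ) - 1⌉))
    convert haut using 1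
    funext n
    show ⌈B n * x n - 1⌉ = _
    simp only
    rw [hrun n]
end
end

section
/- Let δ be an algebraic integer of degree d and let E be a finite set of Pisot numbers of degree d belonging to ℤ[δ]. If B ∈ E^ℕ is an ultimately periodic Cantor real base (an ultimately alternate base), then for every r ∈ ℚ(δ) ∩ [0,1], the greedy expansion d_B(r) and the quasi-greedy expansion d*_B(r) are ultimately periodic sequences. -/
noncomputable section

/-- A sequence is ultimately periodic. -/
def UltimatelyPeriodic {X : Type*} (f : ℕ → X) : Prop :=
  ∃ p : ℕ, 1 ≤ p ∧ ∃ N : ℕ, ∀ n, N ≤ n → f (n + p) = f n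

open Polynomial IntermediateField

set_option maxHeartbeats 1600000

private lemma B_mul_periodic {B : ℕ → ℝ} {p N : ℕ} (h : ∀ n, N ≤ n → B (n + p) = B n) :
    ∀ (m n : ℕ), N ≤ n → B (n + m * p) = B n := by
  intro m
  induction m with
  | zero => simp
  | succ k ih =>
    intro n hn
    have h1 : n + (k + 1) * p = (n + k * p) + p := by ring
    rw [h1, h _ (le_trans hn (Nat.le_add_right _ _)), ih n hn]

private lemma core_periodic
    (d : ℕ) (δ : ℝ) (hδint : IsIntegral ℤ δ) (hδdeg : (minpoly ℚ δ).natDegree = d)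
    (E : Finset ℝ)
    (hEpisot : ∀ β ∈ E, IsPisot β)
    (hEdeg : ∀ β ∈ E, (minpoly ℚ β).natDegree = d)
    (hEZδ : ∀ β ∈ E, ∃ P : Polynomial ℤ, Polynomial.aeval δ P = β)
    (B : ℕ → ℝ) (hBE : ∀ n, B n ∈ E) (hBper : UltimatelyPeriodic B)
    (r : ℝ) (hrQδ : ∃ P : Polynomial ℚ, Polynomial.aeval δ P = r)
    (hr0 : 0 ≤ r) (hr1 : r ≤ 1)
    (T' : ℝ → ℝ → ℝ)
    (hT1 : ∀ β ∈ E, ∀ x : ℝ, 0 ≤ x → x ≤ 1 → 0 ≤ T' β x ∧ T' β x ≤ 1)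
    (hT2 : ∀ β ∈ E, ∀ x : ℝ, 0 ≤ x → x ≤ 1 → ∃ c : ℤ, T' β x = β * x - c)
    (X : ℕ → ℝ) (hX0 : X 0 = r) (hXs : ∀ n, X (n + 1) = T' (B n) (X n)) :
    ∃ P N : ℕ, 1 ≤ P ∧ ∀ n, N ≤ n → B (n + P) = B n ∧ X (n + P) = X n := by
  classical
  obtain ⟨p, hp1, N₀, hBp⟩ := hBper
  have hEne : E.Nonempty := ⟨B 0, hBE 0⟩
  have hB1 : ∀ β ∈ E, (1:ℝ) < β := fun β hβ => (hEpisot β hβ).1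
  set M : ℝ := E.sup' hEne id with hM
  have hMle : ∀ β ∈ E, β ≤ M := fun β hβ => Finset.le_sup' id hβ
  have hM1 : (1:ℝ) < M := lt_of_lt_of_le (hB1 _ (hBE 0)) (hMle _ (hBE 0))
  -- X stays in [0,1]
  have hX01 : ∀ n, 0 ≤ X n ∧ X n ≤ 1 := by
    intro n
    induction n with
    | zero => rw [hX0]; exact ⟨hr0, hr1⟩
    | succ k ih => rw [hXs]; exact hT1 _ (hBE k) _ ih.1 ih.2
  -- digits
  have hcex : ∀ n, ∃ c : ℤ, X (n+1) = B n * X n - c ∧ |(c:ℝ)| ≤ M + 1 := by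
    intro n
    obtain ⟨c, hc⟩ := hT2 _ (hBE n) _ (hX01 n).1 (hX01 n).2
    have hx' : X (n+1) = B n * X n - c := by rw [hXs]; exact hc
    refine ⟨c, hx', ?_⟩
    have h1 := (hX01 n).1
    have h2 := (hX01 n).2
    have h3 := (hX01 (n+1)).1
    have h4 := (hX01 (n+1)).2
    have hBn1 : (1:ℝ) < B n := hB1 _ (hBE n)
    have hBnM : B n ≤ M := hMle _ (hBE n)
    have hBx0 : 0 ≤ B n * X n := mul_nonneg (by linarith) h1
    have hBxM : B n * X n ≤ M := by
      calc B n * X n ≤ B n * 1 := by nlinarith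
      _ ≤ M := by linarith
    rw [abs_le]
    constructor <;> nlinarith
  choose c hcX hcbd using hcex
  -- the number field
  have hδQ : IsIntegral ℚ δ := hδint.tower_top
  set K : IntermediateField ℚ ℝ := ℚ⟮δ⟯ with hK
  haveI : FiniteDimensional ℚ K := IntermediateField.adjoin.finiteDimensional hδQ
  haveI : NumberField K := ⟨⟩
  have hmemδ : δ ∈ K := IntermediateField.mem_adjoin_simple_self ℚ δ
  have hKQ : ∀ x : ℝ, (∃ P : Polynomial ℚ, Polynomial.aeval δ P = x) → x ∈ K := by
    rintro x ⟨P, rfl⟩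
    apply IntermediateField.algebra_adjoin_le_adjoin ℚ {δ}
    rw [Algebra.adjoin_singleton_eq_range_aeval]
    exact ⟨P, rfl⟩
  have hbK : ∀ β ∈ E, β ∈ K := by
    intro β hβ
    obtain ⟨P, hP⟩ := hEZδ β hβ
    exact hKQ β ⟨P.map (algebraMap ℤ ℚ), by rwa [Polynomial.aeval_map_algebraMap]⟩
  have hrK : r ∈ K := hKQ r hrQδ
  have hXK : ∀ n, X n ∈ K := by
    intro n
    induction n with
    | zero => rw [hX0]; exact hrK
    | succ k ih =>
      rw [hcX k]
      exact sub_mem (mul_mem (hbK _ (hBE k)) ih) (IntermediateField.intCast_mem K _)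
  set b : ℕ → K := fun n => ⟨B n, hbK _ (hBE n)⟩ with hb
  set y : ℕ → K := fun n => ⟨X n, hXK n⟩ with hy
  have hyrec : ∀ n, y (n+1) = b n * y n - (c n : K) := by
    intro n
    apply Subtype.ext
    show X (n+1) = (((b n * y n - (c n : K)) : K) : ℝ)
    push_cast
    exact hcX n
  -- integrality of b
  have hbint : ∀ n, IsIntegral ℤ (b n) := by
    intro n
    have h := (hEpisot _ (hBE n)).2.1
    have hinj : Function.Injective (K.val.restrictScalars ℤ) := Subtype.val_injective
    exact (isIntegral_algHom_iff (K.val.restrictScalars ℤ) hinj).mp h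
  -- denominator
  have hralg : IsAlgebraic ℤ (⟨r, hrK⟩ : K) := by
    rw [IsFractionRing.isAlgebraic_iff ℤ ℚ K]
    exact (IsIntegral.of_finite ℚ _).isAlgebraic
  obtain ⟨q, hq0, hqint⟩ := hralg.exists_integral_multiple
  obtain ⟨x₀, q, hq0, hqx⟩ : ∃ x₀ : integralClosure ℤ K, ∃ q : ℤ, q ≠ 0 ∧
      algebraMap ℤ K q * (⟨r, hrK⟩ : K) = x₀ :=
    ⟨⟨_, hqint⟩, q, hq0, (Algebra.smul_def _ _).symm⟩
  have hy0int : IsIntegral ℤ ((q : K) * y 0) := by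
    have hyy : y 0 = ⟨r, hrK⟩ := Subtype.ext hX0
    rw [hyy]
    have : ((q : K)) = algebraMap ℤ K q := by simp
    rw [this, hqx]
    exact x₀.2
  have hyint : ∀ n, IsIntegral ℤ ((q : K) * y n) := by
    intro n
    induction n with
    | zero => exact hy0int
    | succ k ih =>
      have h1 : (q : K) * y (k+1) = b k * ((q : K) * y k) - ((q * c k : ℤ) : K) := by
        rw [hyrec k]; push_cast; ring
      rw [h1]
      exact ((hbint k).mul ih).sub (isIntegral_algebraMap (x := q * c k))
  -- identity embedding characterization
  have hid : ∀ (φ : K →+* ℂ) (β : ℝ) (hβ : β ∈ E),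
      φ ⟨β, hbK β hβ⟩ = (β : ℂ) → ∀ x : K, ‖φ x‖ = |(x : ℝ)| := by
    intro φ β hβ hφβ x
    set β' : K := ⟨β, hbK β hβ⟩ with hβ'
    have hβint : IsIntegral ℚ β' := IsIntegral.of_finite ℚ _
    have hvalβ : K.val β' = β := rfl
    have hdegβ : (minpoly ℚ β').natDegree = d := by
      have := minpoly.algHom_eq K.val Subtype.val_injective β'
      convert hEdeg β hβ using 2
      exact this.symm
    have hfinK : Module.finrank ℚ K = d := by
      rw [hK, IntermediateField.adjoin.finrank hδQ, hδdeg]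
    set F : IntermediateField ℚ (↥K) := IntermediateField.adjoin ℚ ({β'} : Set (↥K)) with hF
    have htop : (Subalgebra.toSubmodule (F.toSubalgebra)) = ⊤ := by
      apply Submodule.eq_top_of_finrank_eq
      rw [Subalgebra.finrank_toSubmodule, IntermediateField.finrank_eq_finrank_subalgebra, hfinK,
        hF, IntermediateField.adjoin.finrank hβint, hdegβ]
    have hxmem : x ∈ Algebra.adjoin ℚ ({β'} : Set (↥K)) := by
      rw [← IntermediateField.adjoin_simple_toSubalgebra_of_isAlgebraic hβint.isAlgebraic]
      have hx2 : x ∈ (⊤ : Submodule ℚ (↥K)) := Submodule.mem_top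
      rw [← htop] at hx2
      exact hx2
    rw [Algebra.adjoin_singleton_eq_range_aeval] at hxmem
    obtain ⟨Q, hQ0⟩ := hxmem
    have hQ : Polynomial.aeval β' Q = x := hQ0
    set ψ : K →ₐ[ℚ] ℂ := RingHom.equivRatAlgHom K ℂ φ with hψ
    have hψφ : ∀ z : K, ψ z = φ z := fun z => rfl
    have h1 : φ x = Polynomial.aeval ((β : ℝ) : ℂ) Q := by
      rw [← hψφ, ← hQ, ← Polynomial.aeval_algHom_apply]
      show Polynomial.aeval (ψ β') Q = _
      rw [show ψ β' = ((β : ℝ) : ℂ) from hφβ]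
    have h2 : (x : ℝ) = Polynomial.aeval β Q := by
      rw [← hQ]
      exact (Polynomial.aeval_algHom_apply K.val β' Q).symm
    have h3 : ((x : ℝ) : ℂ) = Polynomial.aeval ((β : ℝ) : ℂ) Q := by
      rw [h2]
      exact (Polynomial.aeval_algHom_apply (AlgHom.restrictScalars ℚ Complex.ofRealAm) β Q).symm
    rw [h1, ← h3, Complex.norm_real, Real.norm_eq_abs]
  -- bound per embedding
  have hbd : ∀ φ : K →+* ℂ, ∃ C : ℝ, 0 ≤ C ∧ ∀ n, ‖φ (y n)‖ ≤ C := by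
    intro φ
    have hattne : E.attach.Nonempty := Finset.attach_nonempty_iff.mpr hEne
    set g : {z // z ∈ E} → ℝ := fun z => ‖φ ⟨z.1, hbK z.1 z.2⟩‖ with hg
    set ρ := E.attach.sup' hattne g with hρdef
    have hgle : ∀ z : {z // z ∈ E}, g z ≤ ρ := fun z => Finset.le_sup' g (Finset.mem_attach _ z)
    have hnc : ∀ k, ‖((c k : ℤ) : ℂ)‖ = |((c k : ℤ) : ℝ)| := by
      intro k
      rw [show ((c k : ℤ) : ℂ) = (((c k : ℤ) : ℝ) : ℂ) by push_cast; ring,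
        Complex.norm_real, Real.norm_eq_abs]
    rcases lt_or_ge ρ 1 with hρ1 | hρ1
    · have hρ0 : 0 ≤ ρ := le_trans (norm_nonneg _) (hgle ⟨B 0, hBE 0⟩)
      set C := max ‖φ (y 0)‖ ((M+1)/(1-ρ)) with hC
      have hC0 : 0 ≤ C := le_trans (norm_nonneg _) (le_max_left _ _)
      have hCge : (M+1) ≤ (1-ρ) * C := by
        have h := le_max_right ‖φ (y 0)‖ ((M+1)/(1-ρ))
        rw [div_le_iff₀ (by linarith)] at h
        linarith
      refine ⟨C, hC0, ?_⟩
      intro n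
      induction n with
      | zero => exact le_max_left _ _
      | succ k ih =>
        have h1 : φ (y (k+1)) = φ (b k) * φ (y k) - ((c k : ℤ) : ℂ) := by
          rw [hyrec k, map_sub, map_mul, map_intCast]
        have h2 : ‖φ (y (k+1))‖ ≤ ‖φ (b k)‖ * ‖φ (y k)‖ + |((c k : ℤ) : ℝ)| := by
          rw [h1]
          refine le_trans (norm_sub_le _ _) ?_
          rw [norm_mul, hnc k]
        have h3 : ‖φ (b k)‖ ≤ ρ := hgle ⟨B k, hBE k⟩
        have h4 : ‖φ (b k)‖ * ‖φ (y k)‖ ≤ ρ * C :=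
          mul_le_mul h3 ih (norm_nonneg _) hρ0
        have h5 := hcbd k
        calc ‖φ (y (k+1))‖ ≤ ρ * C + (M+1) := by linarith
        _ ≤ C := by nlinarith
    · obtain ⟨z, hzmem, hzeq⟩ := Finset.exists_mem_eq_sup' hattne g
      set β' : K := ⟨z.1, hbK z.1 z.2⟩ with hβ'
      have h1 : (1:ℝ) ≤ ‖φ β'‖ := by
        rw [hρdef] at hρ1; rw [hzeq] at hρ1; exact hρ1
      have hβint : IsIntegral ℚ β' := IsIntegral.of_finite ℚ _
      have hroot : Polynomial.aeval (φ β') (minpoly ℚ z.1) = 0 := by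
        have hmp : minpoly ℚ (z.1 : ℝ) = minpoly ℚ β' := by
          have := minpoly.algHom_eq K.val Subtype.val_injective β'
          exact this
        rw [hmp]
        set ψ : K →ₐ[ℚ] ℂ := RingHom.equivRatAlgHom K ℂ φ with hψ
        have : Polynomial.aeval (ψ β') (minpoly ℚ β') = 0 := by
          rw [Polynomial.aeval_algHom_apply, minpoly.aeval, map_zero]
        exact this
      have heqβ : φ β' = ((z.1 : ℝ) : ℂ) := by
        by_contra hne
        have := (hEpisot z.1 z.2).2.2 (φ β') hroot hne
        linarith
      refine ⟨1, zero_le_one, fun n => ?_⟩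
      have := hid φ z.1 z.2 heqβ (y n)
      rw [this]
      have h01 := hX01 n
      rw [abs_le]
      exact ⟨by simpa using (by linarith [h01.1] : (-1:ℝ) ≤ X n), by simpa using h01.2⟩
  -- uniform bound over embeddings
  choose Cf hCf0 hCf using hbd
  obtain ⟨C, hC⟩ := Finite.exists_le Cf
  have hynorm : ∀ (φ : K →+* ℂ) (n : ℕ), ‖φ (y n)‖ ≤ C := fun φ n => le_trans (hCf φ n) (hC φ)
  -- finiteness
  set T : Set K := {x : K | IsIntegral ℤ x ∧ ∀ φ : K →+* ℂ, ‖φ x‖ ≤ |(q:ℝ)| * C} with hT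
  have hTfin : T.Finite := NumberField.Embeddings.finite_of_norm_le K ℂ _
  set S : Set K := {x : K | IsIntegral ℤ ((q:K) * x) ∧ ∀ φ : K →+* ℂ, ‖φ x‖ ≤ C} with hS
  have hqK : ((q : ℤ) : K) ≠ 0 := Int.cast_ne_zero.mpr hq0
  have hSsub : S ⊆ (fun x : K => (q:K) * x) ⁻¹' T := by
    rintro x ⟨h1, h2⟩
    refine ⟨h1, fun φ => ?_⟩
    have hmulφ : φ ((q:K) * x) = ((q:ℤ):ℂ) * φ x := by rw [map_mul, map_intCast]
    show ‖φ ((q:K) * x)‖ ≤ _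
    rw [hmulφ, norm_mul]
    have hnq : ‖((q:ℤ):ℂ)‖ = |(q:ℝ)| := by
      rw [show ((q:ℤ):ℂ) = (((q:ℤ):ℝ):ℂ) by push_cast; ring, Complex.norm_real,
        Real.norm_eq_abs]
    rw [hnq]
    exact mul_le_mul_of_nonneg_left (h2 φ) (abs_nonneg _)
  have hinj : Function.Injective (fun x : K => (q:K) * x) := fun u v h =>
    mul_left_cancel₀ hqK h
  have hSfin : S.Finite := (hTfin.preimage hinj.injOn).subset hSsub
  have hyS : ∀ n, y n ∈ S := fun n => ⟨hyint n, fun φ => hynorm φ n⟩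
  haveI := hSfin.to_subtype
  -- pigeonhole
  obtain ⟨k1, k2, hkne, hkeq⟩ :=
    Finite.exists_ne_map_eq_of_infinite (fun k : ℕ => (⟨y (N₀ + k * p), hyS _⟩ : S))
  have hmain : ∃ a b1 : ℕ, a < b1 ∧ X (N₀ + a * p) = X (N₀ + b1 * p) := by
    rcases hkne.lt_or_gt with h | h
    · exact ⟨k1, k2, h, congrArg (fun t : S => ((t : K) : ℝ)) hkeq⟩
    · exact ⟨k2, k1, h, (congrArg (fun t : S => ((t : K) : ℝ)) hkeq).symm⟩
  obtain ⟨a, b1, hab, hXeq⟩ := hmain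
  have hBP : ∀ n, N₀ ≤ n → B (n + (b1 - a) * p) = B n :=
    fun n hn => B_mul_periodic hBp (b1 - a) n hn
  have hXbase : X ((N₀ + a * p) + (b1 - a) * p) = X (N₀ + a * p) := by
    have harith : (N₀ + a * p) + (b1 - a) * p = N₀ + b1 * p := by
      have h2 : a * p + (b1 - a) * p = b1 * p := by
        rw [← Nat.add_mul, Nat.add_sub_cancel' hab.le]
      omega
    rw [harith]
    exact hXeq.symm
  have hXP : ∀ n, N₀ + a * p ≤ n → X (n + (b1 - a) * p) = X n := by
    intro n hn
    induction n, hn using Nat.le_induction with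
    | base => exact hXbase
    | succ m hm ih =>
      have h1 : m + 1 + (b1 - a) * p = (m + (b1 - a) * p) + 1 := by omega
      rw [h1, hXs, hXs, hBP m (by omega), ih]
  refine ⟨(b1 - a) * p, N₀ + a * p, ?_, fun n hn => ⟨hBP n (by omega), hXP n hn⟩⟩
  exact Nat.mul_pos (by omega) hp1

/-- If `δ` is an algebraic integer of degree `d`, `E` a finite set of Pisot numbers of
degree `d` in `ℤ[δ]`, and `B ∈ E^ℕ` is an ultimately periodic Cantor real base (an
ultimately alternate base), then for every `r ∈ ℚ(δ) ∩ [0,1]` the expansions `d_B(r)` and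
`d*_B(r)` are ultimately periodic. -/
theorem ultimately_alternate_base_periodic_expansions
    (d : ℕ) (δ : ℝ) (hδint : IsIntegral ℤ δ) (hδdeg : (minpoly ℚ δ).natDegree = d)
    (E : Finset ℝ)
    (hEpisot : ∀ β ∈ E, IsPisot β)
    (hEdeg : ∀ β ∈ E, (minpoly ℚ β).natDegree = d)
    (hEZδ : ∀ β ∈ E, ∃ P : Polynomial ℤ, Polynomial.aeval δ P = β)
    (B : ℕ → ℝ) (hBE : ∀ n, B n ∈ E) (hBper : UltimatelyPeriodic B)
    (r : ℝ) (hrQδ : ∃ P : Polynomial ℚ, Polynomial.aeval δ P = r)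
    (hr0 : 0 ≤ r) (hr1 : r ≤ 1) :
    UltimatelyPeriodic (greedyDigit B r) ∧ UltimatelyPeriodic (quasiGreedyDigit B r) := by
  constructor
  · have hT1 : ∀ β ∈ E, ∀ x : ℝ, 0 ≤ x → x ≤ 1 → 0 ≤ Tmap β x ∧ Tmap β x ≤ 1 := by
      intro β hβ x h0 h1
      unfold Tmap
      constructor
      · have := Int.floor_le (β * x); linarith
      · have := Int.lt_floor_add_one (β * x); linarith
    have hT2 : ∀ β ∈ E, ∀ x : ℝ, 0 ≤ x → x ≤ 1 → ∃ c : ℤ, Tmap β x = β * x - c :=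
      fun β _ x _ _ => ⟨⌊β * x⌋, rfl⟩
    obtain ⟨P, N, hP1, h⟩ := core_periodic d δ hδint hδdeg E hEpisot hEdeg hEZδ B hBE hBper
      r hrQδ hr0 hr1 Tmap hT1 hT2 (fun n => iterT B n r) rfl (fun n => rfl)
    exact ⟨P, hP1, N, fun n hn => by
      unfold greedyDigit; rw [(h n hn).1, (h n hn).2]⟩
  · have hT1 : ∀ β ∈ E, ∀ x : ℝ, 0 ≤ x → x ≤ 1 → 0 ≤ Tstar β x ∧ Tstar β x ≤ 1 := by
      intro β hβ x h0 h1
      unfold Tstar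
      by_cases hx : x = 0
      · simp [hx]
      · rw [if_neg hx]
        constructor
        · have := Int.ceil_lt_add_one (β * x - 1); linarith
        · have := Int.le_ceil (β * x - 1); linarith
    have hT2 : ∀ β ∈ E, ∀ x : ℝ, 0 ≤ x → x ≤ 1 → ∃ c : ℤ, Tstar β x = β * x - c := by
      intro β hβ x h0 h1
      by_cases hx : x = 0
      · exact ⟨0, by simp [Tstar, hx]⟩
      · exact ⟨⌈β * x - 1⌉, by rw [Tstar, if_neg hx]⟩
    obtain ⟨P, N, hP1, h⟩ := core_periodic d δ hδint hδdeg E hEpisot hEdeg hEZδ B hBE hBper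
      r hrQδ hr0 hr1 Tstar hT1 hT2 (fun n => iterTstar B n r) rfl (fun n => rfl)
    exact ⟨P, hP1, N, fun n hn => by
      unfold quasiGreedyDigit; rw [(h n hn).1, (h n hn).2]⟩
end
end
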